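/- arXiv:2405.18766 — 7 statements merged into one kernel-verified Lean document; each statement's English description precedes it below -/
import Mathlib

section
/- Let p, q, k be positive integers, r = min(p,q), and set the sign ε = + if p ≤ q and ε = − if p > q. Let σ = (σ⁺, σ⁻) be a pair of partitions with ℓ(σ⁺) ≤ q, ℓ(σ⁻) ≤ p and ℓ(σ⁺)+ℓ(σ⁻) ≤ k. For T = (T⁺,T⁻) ∈ SSYT(σ⁺,q) × SSYT(σ⁻,p), let T̄⁺ be obtained from T⁺ by adding k−q to every entry and T̄⁻ from T⁻ by adding k−p to every entry. Then T ∈ 𝒬_k(σ) if and only if: T̄^{−ε}_{1,1} ≥ 1 (vacuously true if σ^{−ε} is empty), and T̄^{ε}_{j,1} ≥ ({1,…,k} ∖ T̄^{−ε}_1)_{(j)} for every positive integer j with k−r < j ≤ ℓ(σ^{ε}). -/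
/-- The entries of the semistandard tableau `T` of shape `μ` all lie in `{1, …, n}`,
i.e. `T ∈ SSYT(μ, n)`. (Rows and columns of `SemistandardYoungTableau` are 0-indexed.) -/
def EntriesIn {μ : YoungDiagram} (T : SemistandardYoungTableau μ) (n : ℕ) : Prop :=
  ∀ i j : ℕ, (i, j) ∈ μ → 1 ≤ T i j ∧ T i j ≤ n

/-- The set of entries of column `c` (0-indexed) of the tableau `T`. -/
def colEntries {μ : YoungDiagram} (T : SemistandardYoungTableau μ) (c : ℕ) : Finset ℕ :=
  (Finset.range (μ.colLen c)).image fun i => T i c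

/-- The `j`-th smallest element (1-indexed) of a finite set of integers. -/
def nthZ (S : Finset ℤ) (j : ℕ) : ℤ := (S.sort (· ≤ ·)).getD (j - 1) 0

/-- The set `𝒬_k(σ)` in the `U(p,q)` setting, for `σ = (σ⁺, σ⁻)` realized by the
Young diagrams `(μp, μm)`: pairs `(T⁺, T⁻) ∈ SSYT(σ⁺,q) × SSYT(σ⁻,p)` such that for
every positive integer `i` with `k - min p q < i ≤ k`,
`#{x ∈ T⁺₁ : x < q-k+i} + #{y ∈ T⁻₁ : y < p-k+i} < i`. -/
def QU (p q k : ℕ) (μp μm : YoungDiagram) : Set (SemistandardYoungTableau μp × SemistandardYoungTableau μm) :=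
  { TT | EntriesIn TT.1 q ∧ EntriesIn TT.2 p ∧
    ∀ i : ℕ, k - min p q < i → i ≤ k →
      ((colEntries TT.1 0).filter fun x : ℕ => (x : ℤ) < (q : ℤ) - (k : ℤ) + (i : ℤ)).card +
      ((colEntries TT.2 0).filter fun y : ℕ => (y : ℤ) < (p : ℤ) - (k : ℤ) + (i : ℤ)).card < i }



lemma card_filter_eq_length (S : Finset ℤ) (p : ℤ → Prop) [DecidablePred p] :
    (S.filter p).card = ((S.sort (· ≤ ·)).filter (fun x => decide (p x))).length := by
  have h : (S.sort (· ≤ ·) : Multiset ℤ) = S.val := Finset.sort_eq _ _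
  calc (S.filter p).card = Multiset.card (Multiset.filter p S.val) := rfl
    _ = _ := by rw [← h, Multiset.filter_coe, Multiset.coe_card]

lemma nthZ_eq_getElem (S : Finset ℤ) (j : ℕ) (h : j - 1 < (S.sort (· ≤ ·)).length) :
    nthZ S j = (S.sort (· ≤ ·))[j-1] := List.getD_eq_getElem _ _ h

lemma nthZ_mem (S : Finset ℤ) (j : ℕ) (hjc : j ≤ S.card) (hj : 1 ≤ j) : nthZ S j ∈ S := by
  have h : j - 1 < (S.sort (· ≤ ·)).length := by
    rw [Finset.length_sort]; omega
  rw [nthZ_eq_getElem S j h]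
  exact (Finset.mem_sort _).mp (List.getElem_mem h)

lemma card_filter_lt_nthZ (S : Finset ℤ) (j : ℕ) (hjc : j ≤ S.card) (hj : 1 ≤ j) :
    (S.filter (· < nthZ S j)).card < j := by
  have hlen : (S.sort (· ≤ ·)).length = S.card := Finset.length_sort _
  set l := S.sort (· ≤ ·) with hl
  have h : j - 1 < l.length := by omega
  rw [card_filter_eq_length, nthZ_eq_getElem S j h]
  set P : ℤ → Bool := fun x => decide (x < l[j-1]) with hP
  have hdropnil : (l.drop (j-1)).filter P = [] := by
    rw [List.filter_eq_nil_iff]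
    intro x hx
    simp only [hP, decide_eq_true_eq, not_lt]
    rw [List.drop_eq_getElem_cons h] at hx
    rcases List.mem_cons.mp hx with rfl | hx
    · exact le_refl _
    · refine le_of_lt ?_
      have hs : l.Pairwise (· < ·) := (Finset.sortedLT_sort S).pairwise
      have hmem : l[j-1] ∈ l.take ((j-1)+1) :=
        List.mem_take_iff_getElem.mpr ⟨j-1, by omega, rfl⟩
      exact hs.rel_of_mem_take_of_mem_drop hmem hx
  have hkey : (l.filter P).length
      = ((l.take (j-1)).filter P).length + ((l.drop (j-1)).filter P).length := by
    have h3 := congrArg (fun t : List ℤ => (t.filter P).length) (List.take_append_drop (j-1) l).symm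
    simp only [List.filter_append, List.length_append] at h3
    exact h3
  rw [hkey, hdropnil]
  have := List.length_filter_le P (l.take (j-1))
  have h2 : (l.take (j-1)).length = j - 1 := by simp; omega
  simp only [List.length_nil]
  omega

lemma le_card_filter_of_nthZ_le (S : Finset ℤ) (j : ℕ) (hjc : j ≤ S.card) (hj : 1 ≤ j)
    (t : ℤ) (ht : nthZ S j ≤ t) : j ≤ (S.filter (· ≤ t)).card := by
  have hlen : (S.sort (· ≤ ·)).length = S.card := Finset.length_sort _
  set l := S.sort (· ≤ ·) with hl
  have h : j - 1 < l.length := by omega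
  rw [nthZ_eq_getElem S j h] at ht
  rw [card_filter_eq_length]
  have hall : ∀ x ∈ l.take j, x ≤ t := by
    intro x hx
    obtain ⟨i, hi, rfl⟩ := List.mem_take_iff_getElem.mp hx
    have hs : l.Pairwise (· ≤ ·) := Finset.pairwise_sort S _
    have h1 : l[i] ≤ l[j-1] := by
      have := hs.rel_get_of_le (a := ⟨i, by omega⟩) (b := ⟨j-1, h⟩) (by simp; omega)
      simpa using this
    exact le_trans h1 ht
  have heq : (l.take j).filter (fun x => decide (x ≤ t)) = l.take j := by
    rw [List.filter_eq_self]
    intro x hx; simpa using hall x hx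
  calc j = (l.take j).length := by simp; omega
    _ = ((l.take j).filter (fun x => decide (x ≤ t))).length := by rw [heq]
    _ ≤ _ := ((l.take_sublist j).filter _).length_le

lemma core (k r m : ℕ) (hk : 0 < k) (a : ℕ → ℤ) (B : Finset ℤ)
    (ha : ∀ i j : ℕ, i < j → j < m → a i < a j)
    (hBlo : ∀ y ∈ B, (k : ℤ) - (r : ℤ) < y) (hBhi : ∀ y ∈ B, y ≤ (k : ℤ))
    (hmn : m + B.card ≤ k) :
    (∀ i : ℕ, k - r < i → i ≤ k →
        ((Finset.range m).filter fun i' => a i' < (i : ℤ)).card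
          + (B.filter fun y => y < (i : ℤ)).card < i) ↔
    ((∀ y ∈ B, 1 ≤ y) ∧
      ∀ j : ℕ, k - r < j → j ≤ m →
        nthZ (Finset.Icc (1 : ℤ) (k : ℤ) \ B) j ≤ a (j - 1)) := by
  have hIcc : ∀ v : ℤ, 0 ≤ v → (Finset.Icc (1 : ℤ) v).card = v.toNat := by
    intro v hv; rw [Int.card_Icc]; omega
  constructor
  · intro hQ
    have hy1 : ∀ y ∈ B, 1 ≤ y := by
      intro y hy
      by_cases hrk : r ≤ k
      · have := hBlo y hy; omega
      · have hi := hQ 1 (by omega) (by omega)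
        by_contra hcon
        have hmem : y ∈ B.filter fun y => y < ((1 : ℕ) : ℤ) :=
          Finset.mem_filter.mpr ⟨hy, by push_cast; omega⟩
        have := Finset.card_pos.mpr ⟨y, hmem⟩
        omega
    refine ⟨hy1, ?_⟩
    intro j hj1 hj2
    set C := Finset.Icc (1 : ℤ) (k : ℤ) \ B with hCdef
    have hBsub : B ⊆ Finset.Icc (1 : ℤ) (k : ℤ) := by
      intro y hy; exact Finset.mem_Icc.mpr ⟨hy1 y hy, hBhi y hy⟩
    have hCcard : C.card = k - B.card := by
      rw [hCdef, Finset.card_sdiff_of_subset hBsub, hIcc k (by positivity)]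
      simp
    have hj0 : 1 ≤ j := by omega
    have hjC : j ≤ C.card := by omega
    set v := nthZ C j with hvdef
    have hvC : v ∈ C := nthZ_mem _ _ hjC hj0
    rw [hCdef, Finset.mem_sdiff, Finset.mem_Icc] at hvC
    obtain ⟨⟨hv1, hvk⟩, hvB⟩ := hvC
    have hvj : (j : ℤ) ≤ v := by
      have h1 := le_card_filter_of_nthZ_le C j hjC hj0 v (le_refl v)
      have h2 : C.filter (· ≤ v) ⊆ Finset.Icc (1 : ℤ) v := by
        intro x hx
        rw [Finset.mem_filter, hCdef, Finset.mem_sdiff, Finset.mem_Icc] at hx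
        exact Finset.mem_Icc.mpr ⟨hx.1.1.1, hx.2⟩
      have h3 := Finset.card_le_card h2
      rw [hIcc v (by omega)] at h3
      omega
    by_contra hcon
    push_neg at hcon
    set i := v.toNat with hidef
    have hiv : (i : ℤ) = v := Int.toNat_of_nonneg (by omega)
    have hQi := hQ i (by omega) (by omega)
    have hA : j ≤ ((Finset.range m).filter fun i' => a i' < (i : ℤ)).card := by
      have hsub : Finset.range j ⊆ (Finset.range m).filter fun i' => a i' < (i : ℤ) := by
        intro x hx
        rw [Finset.mem_range] at hx
        rw [Finset.mem_filter, Finset.mem_range]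
        refine ⟨by omega, ?_⟩
        rw [hiv]
        rcases Nat.lt_or_ge x (j - 1) with hx' | hx'
        · exact lt_trans (ha x (j-1) hx' (by omega)) hcon
        · have : x = j - 1 := by omega
          rw [this]; exact hcon
      have := Finset.card_le_card hsub
      simpa using this
    have hC : (C.filter (· < v)).card < j := card_filter_lt_nthZ C j hjC hj0
    have hcover : Finset.Icc (1 : ℤ) (v - 1) ⊆
        (C.filter (· < v)) ∪ (B.filter fun y => y < (i : ℤ)) := by
      intro x hx
      rw [Finset.mem_Icc] at hx
      rw [Finset.mem_union, Finset.mem_filter, Finset.mem_filter, hCdef,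
        Finset.mem_sdiff, Finset.mem_Icc]
      by_cases hxB : x ∈ B
      · right; exact ⟨hxB, by omega⟩
      · left; exact ⟨⟨⟨hx.1, by omega⟩, hxB⟩, by omega⟩
    have hcard := Finset.card_le_card hcover
    have hcard2 := le_trans hcard (Finset.card_union_le _ _)
    rw [hIcc (v-1) (by omega)] at hcard2
    omega
  · rintro ⟨hy1, hR⟩ i hi1 hi2
    set C := Finset.Icc (1 : ℤ) (k : ℤ) \ B with hCdef
    have hBsub : B ⊆ Finset.Icc (1 : ℤ) (k : ℤ) := by
      intro y hy; exact Finset.mem_Icc.mpr ⟨hy1 y hy, hBhi y hy⟩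
    have hCcard : C.card = k - B.card := by
      rw [hCdef, Finset.card_sdiff_of_subset hBsub, hIcc k (by positivity)]
      simp
    set s := ((Finset.range m).filter fun i' => a i' < (i : ℤ)).card with hsdef
    have hsm : s ≤ m := by
      have := Finset.card_filter_le (Finset.range m) (fun i' => a i' < (i : ℤ))
      simpa using this
    have hdown : ∀ i' < s, a i' < (i : ℤ) := by
      intro i' hi'
      by_contra hcon
      have hsub : ((Finset.range m).filter fun x => a x < (i : ℤ)) ⊆ Finset.range i' := by
        intro x hx
        rw [Finset.mem_filter, Finset.mem_range] at hx
        rw [Finset.mem_range]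
        by_contra hxx
        push_neg at hxx
        rcases Nat.eq_or_lt_of_le hxx with heq | hlt
        · exact hcon (heq ▸ hx.2)
        · exact hcon (lt_trans (ha i' x hlt hx.1) hx.2)
      have := Finset.card_le_card hsub
      simp only [Finset.card_range] at this
      omega
    by_cases hcase : (s : ℤ) ≤ (k : ℤ) - (r : ℤ)
    · have hsub : (B.filter fun y => y < (i : ℤ)) ⊆ Finset.Ioo ((k : ℤ) - (r : ℤ)) (i : ℤ) := by
        intro y hy
        rw [Finset.mem_filter] at hy
        exact Finset.mem_Ioo.mpr ⟨hBlo y hy.1, hy.2⟩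
      have h1 := Finset.card_le_card hsub
      rw [Int.card_Ioo] at h1
      omega
    · push_neg at hcase
      have hBIcc : (B.filter fun y => y < (i : ℤ)) ⊆ Finset.Icc (1 : ℤ) ((i : ℤ) - 1) := by
        intro y hy
        rw [Finset.mem_filter] at hy
        exact Finset.mem_Icc.mpr ⟨hy1 y hy.1, by omega⟩
      by_cases hs0 : s = 0
      · have h1 := Finset.card_le_card hBIcc
        rw [hIcc ((i : ℤ) - 1) (by omega)] at h1
        omega
      · have hs1 : 1 ≤ s := by omega
        have hskr : k - r < s := by omega
        have hv := hR s hskr hsm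
        have hsC : s ≤ C.card := by omega
        have hvlt : nthZ C s ≤ (i : ℤ) - 1 := by
          have h4 := hdown (s - 1) (by omega)
          omega
        have h2 := le_card_filter_of_nthZ_le C s hsC hs1 ((i : ℤ) - 1) hvlt
        have heqf : C.filter (· ≤ (i : ℤ) - 1) = C.filter (· < (i : ℤ)) := by
          apply Finset.filter_congr
          intro x _
          constructor <;> intro h <;> omega
        rw [heqf] at h2
        have hdisj : Disjoint (C.filter (· < (i : ℤ))) (B.filter fun y => y < (i : ℤ)) := by
          rw [Finset.disjoint_left]
          intro x hx hx'
          rw [Finset.mem_filter, hCdef, Finset.mem_sdiff] at hx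
          rw [Finset.mem_filter] at hx'
          exact hx.1.2 hx'.1
        have hsub2 : (C.filter (· < (i : ℤ))) ∪ (B.filter fun y => y < (i : ℤ)) ⊆
            Finset.Icc (1 : ℤ) ((i : ℤ) - 1) := by
          intro x hx
          rcases Finset.mem_union.mp hx with hx | hx
          · rw [Finset.mem_filter, hCdef, Finset.mem_sdiff, Finset.mem_Icc] at hx
            exact Finset.mem_Icc.mpr ⟨hx.1.1.1, by omega⟩
          · exact hBIcc hx
        have h3 := Finset.card_le_card hsub2
        rw [Finset.card_union_of_disjoint hdisj, hIcc ((i : ℤ) - 1) (by omega)] at h3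
        omega

lemma col_mono {μ : YoungDiagram} (T : SemistandardYoungTableau μ) {i1 i2 : ℕ}
    (h : i1 ≤ i2) (h2 : i2 < μ.colLen 0) : T i1 0 ≤ T i2 0 := by
  rcases Nat.eq_or_lt_of_le h with rfl | hlt
  · exact le_refl _
  · exact le_of_lt (T.col_strict hlt (YoungDiagram.mem_iff_lt_colLen.mpr h2))

lemma mid (p' q' k : ℕ) (hk : 0 < k) {μa μb : YoungDiagram}
    (Ta : SemistandardYoungTableau μa) (Tb : SemistandardYoungTableau μb)
    (hTa : EntriesIn Ta q') (hTb : EntriesIn Tb p')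
    (hmn : μa.colLen 0 + μb.colLen 0 ≤ k) :
    (∀ i : ℕ, k - p' < i → i ≤ k →
        ((colEntries Ta 0).filter fun x : ℕ => (x : ℤ) < (q' : ℤ) - (k : ℤ) + (i : ℤ)).card +
        ((colEntries Tb 0).filter fun y : ℕ => (y : ℤ) < (p' : ℤ) - (k : ℤ) + (i : ℤ)).card < i) ↔
    ((0 < μb.colLen 0 → 1 ≤ (Tb 0 0 : ℤ) + ((k : ℤ) - (p' : ℤ))) ∧
      ∀ j : ℕ, k - p' < j → j ≤ μa.colLen 0 →
        nthZ (Finset.Icc (1 : ℤ) (k : ℤ) \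
            ((colEntries Tb 0).image fun y : ℕ => (y : ℤ) + ((k : ℤ) - (p' : ℤ)))) j ≤
          (Ta (j - 1) 0 : ℤ) + ((k : ℤ) - (q' : ℤ))) := by
  set m := μa.colLen 0 with hm
  set n := μb.colLen 0 with hn
  set a : ℕ → ℤ := fun i' => (Ta i' 0 : ℤ) + ((k : ℤ) - (q' : ℤ)) with hadef
  set B : Finset ℤ := (colEntries Tb 0).image fun y : ℕ => (y : ℤ) + ((k : ℤ) - (p' : ℤ)) with hBdef
  -- basic entry facts
  have hTbmem : ∀ b ∈ colEntries Tb 0, 1 ≤ b ∧ b ≤ p' := by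
    intro b hb
    rw [colEntries, Finset.mem_image] at hb
    obtain ⟨i, hi, rfl⟩ := hb
    rw [Finset.mem_range] at hi
    exact hTb i 0 (YoungDiagram.mem_iff_lt_colLen.mpr hi)
  have ha : ∀ i j : ℕ, i < j → j < m → a i < a j := by
    intro i j hij hj
    have := Ta.col_strict hij (YoungDiagram.mem_iff_lt_colLen.mpr hj)
    simp only [hadef]
    omega
  have hginj : Function.Injective fun y : ℕ => (y : ℤ) + ((k : ℤ) - (p' : ℤ)) := by
    intro x y hxy; simp at hxy; omega
  have hBcard : B.card = n := by
    rw [hBdef, Finset.card_image_of_injective _ hginj, colEntries,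
      Finset.card_image_of_injOn, Finset.card_range]
    intro x hx y hy hxy
    simp only [Finset.coe_range, Set.mem_Iio] at hx hy
    by_contra hne
    rcases Nat.lt_or_ge x y with h | h
    · exact absurd hxy (ne_of_lt (Tb.col_strict h (YoungDiagram.mem_iff_lt_colLen.mpr hy)))
    · have h' : y < x := by omega
      exact absurd hxy.symm (ne_of_lt (Tb.col_strict h' (YoungDiagram.mem_iff_lt_colLen.mpr hx)))
  have hBlo : ∀ y ∈ B, (k : ℤ) - (p' : ℤ) < y := by
    intro y hy
    rw [hBdef, Finset.mem_image] at hy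
    obtain ⟨b, hb, rfl⟩ := hy
    have := (hTbmem b hb).1
    omega
  have hBhi : ∀ y ∈ B, y ≤ (k : ℤ) := by
    intro y hy
    rw [hBdef, Finset.mem_image] at hy
    obtain ⟨b, hb, rfl⟩ := hy
    have := (hTbmem b hb).2
    omega
  have hmn' : m + B.card ≤ k := by rw [hBcard]; exact hmn
  have hcore := core k p' m hk a B ha hBlo hBhi hmn'
  -- translate the card expressions
  have hAcard : ∀ i : ℕ,
      ((colEntries Ta 0).filter fun x : ℕ => (x : ℤ) < (q' : ℤ) - (k : ℤ) + (i : ℤ)).card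
        = ((Finset.range m).filter fun i' => a i' < (i : ℤ)).card := by
    intro i
    rw [colEntries, Finset.filter_image, Finset.card_image_of_injOn]
    · congr 1
      apply Finset.filter_congr
      intro x _
      simp only [hadef]
      constructor <;> intro h <;> omega
    · intro x hx y hy hxy
      simp only [Finset.coe_filter, Set.mem_setOf_eq, Finset.mem_range] at hx hy
      by_contra hne
      rcases Nat.lt_or_ge x y with h | h
      · exact absurd hxy (ne_of_lt (Ta.col_strict h (YoungDiagram.mem_iff_lt_colLen.mpr hy.1)))
      · have h' : y < x := by omega
        exact absurd hxy.symm (ne_of_lt (Ta.col_strict h' (YoungDiagram.mem_iff_lt_colLen.mpr hx.1)))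
  have hBcard' : ∀ i : ℕ,
      ((colEntries Tb 0).filter fun y : ℕ => (y : ℤ) < (p' : ℤ) - (k : ℤ) + (i : ℤ)).card
        = (B.filter fun y => y < (i : ℤ)).card := by
    intro i
    rw [hBdef, Finset.filter_image, Finset.card_image_of_injective _ hginj]
    congr 1
    apply Finset.filter_congr
    intro x _
    constructor <;> intro h <;> [skip; skip] <;> omega
  have hy1iff : (∀ y ∈ B, 1 ≤ y) ↔ (0 < n → 1 ≤ (Tb 0 0 : ℤ) + ((k : ℤ) - (p' : ℤ))) := by
    constructor
    · intro h hn0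
      apply h
      rw [hBdef, Finset.mem_image]
      exact ⟨Tb 0 0, by rw [colEntries, Finset.mem_image]; exact ⟨0, Finset.mem_range.mpr hn0, rfl⟩, rfl⟩
    · intro h y hy
      rw [hBdef, Finset.mem_image] at hy
      obtain ⟨b, hb, rfl⟩ := hy
      rw [colEntries, Finset.mem_image] at hb
      obtain ⟨i, hi, rfl⟩ := hb
      rw [Finset.mem_range] at hi
      have h1 := h (by omega)
      have h2 : Tb 0 0 ≤ Tb i 0 := col_mono Tb (Nat.zero_le i) hi
      omega
  constructor
  · intro hQ
    have hc := hcore.mp (by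
      intro i h1 h2
      rw [← hAcard i, ← hBcard' i]
      exact hQ i h1 h2)
    exact ⟨hy1iff.mp hc.1, hc.2⟩
  · intro hR
    intro i h1 h2
    rw [hAcard i, hBcard' i]
    exact hcore.mpr ⟨hy1iff.mpr hR.1, hR.2⟩ i h1 h2

/-- Lemma 3.5(1): explicit criterion for membership in `𝒬_k(σ)` in the `U(p,q)` case.
Writing `T̄⁺` (resp. `T̄⁻`) for the tableau obtained by adding `k-q` (resp. `k-p`) to
every entry of `T⁺` (resp. `T⁻`), and `ε = +` iff `p ≤ q`: `T ∈ 𝒬_k(σ)` iff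
`T̄^{-ε}_{1,1} ≥ 1` (vacuous if `σ^{-ε}` is empty) and
`T̄^{ε}_{j,1} ≥ ([k] \ T̄^{-ε}_1)_{(j)}` for all `k - min p q < j ≤ ℓ(σ^ε)`. -/
theorem statement6 (p q k : ℕ) (hp : 0 < p) (hq : 0 < q) (hk : 0 < k)
    (μp μm : YoungDiagram) (hμp : μp.colLen 0 ≤ q) (hμm : μm.colLen 0 ≤ p)
    (hsum : μp.colLen 0 + μm.colLen 0 ≤ k)
    (T₁ : SemistandardYoungTableau μp) (T₂ : SemistandardYoungTableau μm) (hT₁ : EntriesIn T₁ q) (hT₂ : EntriesIn T₂ p) :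
    (T₁, T₂) ∈ QU p q k μp μm ↔
      (if p ≤ q then
        ((0 < μm.colLen 0 → 1 ≤ (T₂ 0 0 : ℤ) + ((k : ℤ) - (p : ℤ))) ∧
          ∀ j : ℕ, k - min p q < j → j ≤ μp.colLen 0 →
            nthZ (Finset.Icc (1 : ℤ) (k : ℤ) \
                ((colEntries T₂ 0).image fun y : ℕ => (y : ℤ) + ((k : ℤ) - (p : ℤ)))) j ≤
              (T₁ (j - 1) 0 : ℤ) + ((k : ℤ) - (q : ℤ)))
      else
        ((0 < μp.colLen 0 → 1 ≤ (T₁ 0 0 : ℤ) + ((k : ℤ) - (q : ℤ))) ∧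
          ∀ j : ℕ, k - min p q < j → j ≤ μm.colLen 0 →
            nthZ (Finset.Icc (1 : ℤ) (k : ℤ) \
                ((colEntries T₁ 0).image fun x : ℕ => (x : ℤ) + ((k : ℤ) - (q : ℤ)))) j ≤
              (T₂ (j - 1) 0 : ℤ) + ((k : ℤ) - (p : ℤ)))) := by
  simp only [QU, Set.mem_setOf_eq]
  by_cases h : p ≤ q
  · rw [if_pos h]
    have hmin : min p q = p := min_eq_left h
    rw [hmin]
    have hM := mid p q k hk T₁ T₂ hT₁ hT₂ hsum
    constructor
    · rintro ⟨-, -, hQ⟩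
      exact hM.mp hQ
    · intro hR
      exact ⟨hT₁, hT₂, hM.mpr hR⟩
  · rw [if_neg h]
    have hmin : min p q = q := min_eq_right (by omega)
    rw [hmin]
    have hM := mid q p k hk T₂ T₁ hT₂ hT₁ (by omega)
    constructor
    · rintro ⟨-, -, hQ⟩
      apply hM.mp
      intro i h1 h2
      have := hQ i h1 h2
      omega
    · intro hR
      refine ⟨hT₁, hT₂, ?_⟩
      intro i h1 h2
      have := hM.mpr hR i h1 h2
      omega
end

section
/- Let n, k be positive integers and σ a partition with ℓ(σ) ≤ n and σ′_1 + σ′_2 ≤ k. Let I = {n−k+1, …, n} as a set of integers, and let T ∈ SSYT(σ,n). Then T ∈ 𝒬_k(σ) if and only if T_{1,1} ≥ n−k+1 and T_{j,2} ≥ (I ∖ T_1)_{(j)} for every positive integer j with 1 ≤ j ≤ σ′_2. -/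
/-- The set `𝒬_k(σ)` in the `Mp(2n,ℝ)` (orthogonal) setting: tableaux
`T ∈ SSYT(σ, n)` such that for every positive integer `i` with `k - n < i ≤ k`, the
number of entries `x` (counted with multiplicity) in columns 1 and 2 of `T` with
`x < n - k + i` is strictly less than `i`. -/
def QO (n k : ℕ) (μ : YoungDiagram) : Set (SemistandardYoungTableau μ) :=
  { T | EntriesIn T n ∧
    ∀ i : ℕ, k - n < i → i ≤ k →
      ((Finset.range (μ.colLen 0)).filter fun r =>
          (T r 0 : ℤ) < (n : ℤ) - (k : ℤ) + (i : ℤ)).card +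
      ((Finset.range (μ.colLen 1)).filter fun r =>
          (T r 1 : ℤ) < (n : ℤ) - (k : ℤ) + (i : ℤ)).card < i }

/- ### Auxiliary lemmas -/

lemma filterCard_eq_countP (S : Finset ℤ) (p : ℤ → Prop) [DecidablePred p] :
    (S.filter p).card = (S.sort (· ≤ ·)).countP (fun x => decide (p x)) := by
  have h1 : (S.filter p).card = Multiset.countP p S.1 := by
    rw [Multiset.countP_eq_card_filter]; rfl
  rw [h1, ← Finset.sort_eq (s := S) (r := (· ≤ ·)), Multiset.coe_countP]

lemma countLt_get (L : List ℤ) (h : L.Pairwise (· < ·)) (j : ℕ) (hj : j < L.length) :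
    L.countP (fun x => decide (x < L.get ⟨j, hj⟩)) = j := by
  induction L generalizing j with
  | nil => simp at hj
  | cons x L ih =>
    rcases j with _ | j
    · simp only [List.get, List.countP_cons]
      rw [List.countP_eq_zero.2]
      · simp
      · intro a ha
        have := (List.pairwise_cons.1 h).1 a ha
        simp; omega
    · have hs := List.pairwise_cons.1 h
      simp only [List.get, List.countP_cons]
      have hx : x < L.get ⟨j, by simpa using hj⟩ := hs.1 _ (L.get_mem _)
      rw [ih hs.2 j (by simpa using hj)]
      simp only [List.get_eq_getElem] at hx
      simp [hx]

lemma le_get_countP (L : List ℤ) (h : L.Pairwise (· < ·)) (t : ℤ)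
    (hs : L.countP (fun x => decide (x < t)) < L.length) :
    t ≤ L.get ⟨L.countP (fun x => decide (x < t)), hs⟩ := by
  induction L with
  | nil => simp at hs
  | cons x L ih =>
    have hsort := List.pairwise_cons.1 h
    by_cases hx : x < t
    · simp only [List.countP_cons, hx, decide_true, if_true] at hs ⊢
      have hlt : L.countP (fun x => decide (x < t)) < L.length := by
        simp only [List.length_cons] at hs; omega
      have := ih hsort.2 hlt
      simpa [List.get_eq_getElem] using this
    · have h0 : L.countP (fun x => decide (x < t)) = 0 := by
        apply List.countP_eq_zero.2
        intro a ha
        have := hsort.1 a ha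
        simp; omega
      simp only [List.countP_cons, hx, decide_false, h0]
      simpa using not_lt.1 hx

lemma le_get_of_countP (L : List ℤ) (h : L.Pairwise (· < ·)) (t : ℤ) (s : ℕ)
    (hsc : L.countP (fun x => decide (x < t)) = s) (hlen : s < L.length) :
    t ≤ L.get ⟨s, hlen⟩ := by
  subst hsc
  exact le_get_countP L h t hlen


/-- Lemma 3.5(2): explicit criterion for membership in `𝒬_k(σ)` in the
`Mp(2n,ℝ)` case. With `I = {n-k+1, …, n}` (as integers), `T ∈ 𝒬_k(σ)` iff
`T_{1,1} ≥ n-k+1` and `T_{j,2} ≥ (I \ T₁)_{(j)}` for all `1 ≤ j ≤ σ'₂`. -/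
theorem statement7 (n k : ℕ) (hn : 0 < n) (hk : 0 < k)
    (μ : YoungDiagram) (hℓ : μ.colLen 0 ≤ n) (hcols : μ.colLen 0 + μ.colLen 1 ≤ k)
    (T : SemistandardYoungTableau μ) (hT : EntriesIn T n) :
    T ∈ QO n k μ ↔
      ((0 < μ.colLen 0 → (n : ℤ) - (k : ℤ) + 1 ≤ (T 0 0 : ℤ)) ∧
        ∀ j : ℕ, 1 ≤ j → j ≤ μ.colLen 1 →
          nthZ (Finset.Icc ((n : ℤ) - (k : ℤ) + 1) (n : ℤ) \
              ((colEntries T 0).image fun x : ℕ => (x : ℤ))) j ≤ (T (j - 1) 1 : ℤ)) := by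
  classical
  set a := μ.colLen 0 with ha_def
  set b := μ.colLen 1 with hb_def
  set m : ℤ := (n : ℤ) - (k : ℤ) with hm_def
  set I : Finset ℤ := Finset.Icc (m + 1) (n : ℤ) with hI_def
  set AZ : Finset ℤ := (colEntries T 0).image (fun x : ℕ => (x : ℤ)) with hAZ_def
  set D : Finset ℤ := I \ AZ with hD_def
  set L : List ℤ := D.sort (· ≤ ·) with hL_def
  have hba : b ≤ a := μ.colLen_anti 0 1 (by norm_num)
  have hmem0 : ∀ r : ℕ, r < a → (r, 0) ∈ μ := fun r hr =>
    YoungDiagram.mem_iff_lt_colLen.2 hr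
  have hmem1 : ∀ r : ℕ, r < b → (r, 1) ∈ μ := fun r hr =>
    YoungDiagram.mem_iff_lt_colLen.2 hr
  have hmono0 : ∀ r s : ℕ, r ≤ s → s < a → T r 0 ≤ T s 0 := by
    intro r s hrs hs
    rcases lt_or_eq_of_le hrs with h | h
    · exact (T.col_strict h (hmem0 s hs)).le
    · rw [h]
  have hmono1 : ∀ r s : ℕ, r ≤ s → s < b → T r 1 ≤ T s 1 := by
    intro r s hrs hs
    rcases lt_or_eq_of_le hrs with h | h
    · exact (T.col_strict h (hmem1 s hs)).le
    · rw [h]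
  have hrow : ∀ r : ℕ, r < b → T r 0 ≤ T r 1 := fun r hr =>
    T.row_weak (by norm_num) (hmem1 r hr)
  have hE0 : ∀ r : ℕ, r < a → 1 ≤ T r 0 ∧ T r 0 ≤ n := fun r hr => hT r 0 (hmem0 r hr)
  have hE1 : ∀ r : ℕ, r < b → 1 ≤ T r 1 ∧ T r 1 ≤ n := fun r hr => hT r 1 (hmem1 r hr)
  -- `AZ` as an image of `range a`
  have hAZeq : AZ = (Finset.range a).image (fun r => (T r 0 : ℤ)) := by
    rw [hAZ_def, colEntries, Finset.image_image]
    rfl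
  have hinj : Set.InjOn (fun r => (T r 0 : ℤ)) (Finset.range a : Set ℕ) := by
    intro x hx y hy hxy
    simp only [Finset.coe_range, Set.mem_Iio] at hx hy
    have hxy2 : (T x 0 : ℤ) = (T y 0 : ℤ) := hxy
    have hxy' : T x 0 = T y 0 := by exact_mod_cast hxy2
    rcases lt_trichotomy x y with h | h | h
    · exact absurd hxy' (T.col_strict h (hmem0 y hy)).ne
    · exact h
    · exact absurd hxy'.symm (T.col_strict h (hmem0 x hx)).ne
  have hAZcard : AZ.card = a := by
    rw [hAZeq, Finset.card_image_of_injOn hinj, Finset.card_range]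
  -- counting in column 0 via the set `AZ`
  have hrange0 : ∀ t : ℤ,
      ((Finset.range a).filter fun r => (T r 0 : ℤ) < t).card = (AZ.filter (· < t)).card := by
    intro t
    rw [hAZeq, Finset.filter_image,
      Finset.card_image_of_injOn (hinj.mono (by
        intro x hx
        simp only [Finset.coe_filter, Set.mem_setOf_eq] at hx
        simpa using hx.1))]
  have hIcard : I.card = k := by
    rw [hI_def, Int.card_Icc]
    omega
  have hIfilter : ∀ t : ℤ, t ≤ (n : ℤ) + 1 →
      (I.filter (· < t)).card = (t - (m + 1)).toNat := by
    intro t ht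
    have : I.filter (· < t) = Finset.Ico (m + 1) t := by
      ext x
      simp only [hI_def, Finset.mem_filter, Finset.mem_Icc, Finset.mem_Ico]
      omega
    rw [this, Int.card_Ico]
  -- the partition identity, assuming all column-0 entries lie in `I`
  have hpart : AZ ⊆ I → ∀ t : ℤ,
      (AZ.filter (· < t)).card + (D.filter (· < t)).card = (I.filter (· < t)).card := by
    intro hsub t
    have hdisj : Disjoint AZ D := hD_def ▸ Finset.disjoint_sdiff
    rw [← Finset.card_union_of_disjoint (Finset.disjoint_filter_filter hdisj),
      ← Finset.filter_union, hD_def, Finset.union_sdiff_of_subset hsub]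
  have hDcard : AZ ⊆ I → D.card = k - a := by
    intro hsub
    rw [hD_def, Finset.card_sdiff_of_subset hsub, hIcard, hAZcard]
  have hLlen : L.length = D.card := Finset.length_sort _
  have hLsort : L.Pairwise (· < ·) := (Finset.sortedLT_sort _).pairwise
  have hDfilter : ∀ t : ℤ, (D.filter (· < t)).card = L.countP (fun x => decide (x < t)) :=
    fun t => filterCard_eq_countP D (· < t)
  -- all column-0 entries lie in `I`, given the bound on `T 0 0`
  have hsub_of : (0 < a → m + 1 ≤ (T 0 0 : ℤ)) → AZ ⊆ I := by
    intro h00 x hx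
    rw [hAZeq] at hx
    simp only [Finset.mem_image, Finset.mem_range] at hx
    obtain ⟨r, hr, rfl⟩ := hx
    have h1 := h00 (Nat.pos_of_ne_zero (by omega))
    have h2 := hmono0 0 r (Nat.zero_le r) hr
    have h3 := (hE0 r hr).2
    rw [hI_def, Finset.mem_Icc]
    omega
  constructor
  · -- forward direction
    rintro ⟨hE, hcnt⟩
    have h00 : 0 < a → m + 1 ≤ (T 0 0 : ℤ) := by
      intro ha
      by_cases hkn : n ≤ k
      · have := (hE0 0 ha).1
        omega
      · have h1 := hcnt 1 (by omega) (by omega)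
        rw [← ha_def, ← hb_def] at h1
        have hc0 : ((Finset.range a).filter fun r =>
            (T r 0 : ℤ) < (n : ℤ) - (k : ℤ) + ((1 : ℕ) : ℤ)).card = 0 := by omega
        by_contra hcon
        have h0mem : (0 : ℕ) ∈ (Finset.range a).filter fun r =>
            (T r 0 : ℤ) < (n : ℤ) - (k : ℤ) + ((1 : ℕ) : ℤ) := by
          simp only [Finset.mem_filter, Finset.mem_range]
          constructor
          · exact ha
          · push_cast
            omega
        rw [Finset.card_eq_zero.1 hc0] at h0mem
        exact absurd h0mem (Finset.notMem_empty 0)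
    refine ⟨h00, ?_⟩
    intro j hj1 hjb
    have hsub : AZ ⊆ I := hsub_of h00
    have hDc : D.card = k - a := hDcard hsub
    have hjlen : j - 1 < L.length := by rw [hLlen, hDc]; omega
    by_contra hcon
    push_neg at hcon
    set d : ℤ := nthZ D j with hd_def
    have hdget : d = L.get ⟨j - 1, hjlen⟩ := by
      rw [hd_def, nthZ, ← hL_def, List.getD_eq_getElem L 0 hjlen]
      simp [List.get_eq_getElem]
    have hdD : d ∈ D := by
      rw [hdget]
      exact (Finset.mem_sort (α := ℤ) (· ≤ ·)).1 (L.get_mem ⟨j - 1, hjlen⟩)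
    have hdI : m + 1 ≤ d ∧ d ≤ (n : ℤ) := by
      have := Finset.mem_sdiff.1 hdD
      have := this.1
      rw [hI_def, Finset.mem_Icc] at this
      exact this
    have hTj1 : 1 ≤ T (j - 1) 1 := (hE1 (j - 1) (by omega)).1
    have hd2 : 2 ≤ d := by
      have : (1 : ℤ) ≤ (T (j - 1) 1 : ℤ) := by exact_mod_cast hTj1
      omega
    set i : ℕ := (d - m).toNat with hi_def
    have hi : (i : ℤ) = d - m := by
      rw [hi_def]; omega
    have hik : i ≤ k := by omega
    have hikn : k - n < i := by omega
    have hc := hcnt i hikn hik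
    have hth : (n : ℤ) - (k : ℤ) + (i : ℤ) = d := by omega
    rw [← ha_def, ← hb_def] at hc
    simp only [hth] at hc
    -- count in column 0
    have hA : (AZ.filter (· < d)).card + (D.filter (· < d)).card = (I.filter (· < d)).card :=
      hpart hsub d
    have hDcnt : (D.filter (· < d)).card = j - 1 := by
      rw [hDfilter d, hdget]
      exact countLt_get L hLsort (j - 1) hjlen
    have hIcnt : (I.filter (· < d)).card = (d - (m + 1)).toNat :=
      hIfilter d (by omega)
    -- count in column 1 is at least j
    have hB : j ≤ ((Finset.range b).filter fun r => (T r 1 : ℤ) < d).card := by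
      have hsub2 : Finset.range j ⊆ (Finset.range b).filter fun r => (T r 1 : ℤ) < d := by
        intro r hr
        simp only [Finset.mem_range] at hr
        simp only [Finset.mem_filter, Finset.mem_range]
        refine ⟨by omega, ?_⟩
        have h4 := hmono1 r (j - 1) (by omega) (by omega)
        have : (T r 1 : ℤ) ≤ (T (j - 1) 1 : ℤ) := by exact_mod_cast h4
        omega
      calc j = (Finset.range j).card := (Finset.card_range j).symm
        _ ≤ _ := Finset.card_le_card hsub2
    rw [hrange0 d] at hc
    omega
  · -- backward direction
    rintro ⟨h00, hnth⟩
    refine ⟨hT, ?_⟩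
    intro i hikn hik
    set t : ℤ := (n : ℤ) - (k : ℤ) + (i : ℤ) with ht_def
    rw [← ha_def, ← hb_def]
    by_cases ha0 : a = 0
    · have hb0 : b = 0 := by omega
      rw [ha0, hb0]
      simp only [Finset.range_zero, Finset.filter_empty, Finset.card_empty]
      omega
    · have hsub : AZ ⊆ I := hsub_of h00
      have hDc : D.card = k - a := hDcard hsub
      set s : ℕ := (D.filter (· < t)).card with hs_def
      -- column 0 count
      have hA : (AZ.filter (· < t)).card + s = (I.filter (· < t)).card := hpart hsub t
      have hIcnt : (I.filter (· < t)).card = (t - (m + 1)).toNat :=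
        hIfilter t (by omega)
      -- column 1 count is at most s
      have hB : ((Finset.range b).filter fun r => (T r 1 : ℤ) < t).card ≤ s := by
        by_cases hsb : s < b
        · have hslen : s < L.length := by rw [hLlen, hDc]; omega
          have hsc : L.countP (fun x => decide (x < t)) = s := (hDfilter t).symm
          have hle : t ≤ L.get ⟨s, hslen⟩ := le_get_of_countP L hLsort t s hsc hslen
          have hnthv : nthZ D (s + 1) = L.get ⟨s, hslen⟩ := by
            rw [nthZ, ← hL_def, Nat.add_sub_cancel, List.getD_eq_getElem L 0 hslen]
            simp [List.get_eq_getElem]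
          have h5 := hnth (s + 1) (by omega) (by omega)
          rw [Nat.add_sub_cancel] at h5
          have hts : t ≤ (T s 1 : ℤ) := by
            rw [hnthv] at h5
            exact le_trans hle h5
          have hsub2 : ((Finset.range b).filter fun r => (T r 1 : ℤ) < t) ⊆
              Finset.range s := by
            intro r hr
            simp only [Finset.mem_filter, Finset.mem_range] at hr
            simp only [Finset.mem_range]
            by_contra hrs
            push_neg at hrs
            have h6 := hmono1 s r hrs hr.1
            have : (T s 1 : ℤ) ≤ (T r 1 : ℤ) := by exact_mod_cast h6
            omega
          calc _ ≤ (Finset.range s).card := Finset.card_le_card hsub2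
            _ = s := Finset.card_range s
        · calc _ ≤ (Finset.range b).card := Finset.card_filter_le _ _
            _ = b := Finset.card_range b
            _ ≤ s := by omega
      rw [hrange0 t]
      omega
end

section
/- Let n, k be positive integers and σ a partition with ℓ(σ) ≤ min(n,k). For T ∈ SSYT(σ,n), we have T ∈ 𝒬_k(σ) if and only if T_{j,1} ≥ n + 2(j−k) − 1 for all 1 ≤ j ≤ ℓ(σ). -/
/-- The set `𝒬_k(σ)` in the `O*(2n)` (symplectic) setting: tableaux
`T ∈ SSYT(σ, n)` such that for every positive integer `i` with `k - ⌊n/2⌋ < i ≤ k`,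
`#{x ∈ T₁ : x < n - 1 - 2k + 2i} < i`. -/
def QS (n k : ℕ) (μ : YoungDiagram) : Set (SemistandardYoungTableau μ) :=
  { T | EntriesIn T n ∧
    ∀ i : ℕ, k - n / 2 < i → i ≤ k →
      ((colEntries T 0).filter fun x : ℕ =>
          (x : ℤ) < (n : ℤ) - 1 - 2 * (k : ℤ) + 2 * (i : ℤ)).card < i }

/-- Lemma 3.5(3): explicit criterion for membership in `𝒬_k(σ)` in the `O*(2n)`
case: `T ∈ 𝒬_k(σ)` iff `T_{j,1} ≥ n + 2(j-k) - 1` for all `1 ≤ j ≤ ℓ(σ)`. -/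
theorem statement8 (n k : ℕ) (hn : 0 < n) (hk : 0 < k)
    (μ : YoungDiagram) (hℓ : μ.colLen 0 ≤ min n k)
    (T : SemistandardYoungTableau μ) (hT : EntriesIn T n) :
    T ∈ QS n k μ ↔
      ∀ j : ℕ, 1 ≤ j → j ≤ μ.colLen 0 →
        (n : ℤ) + 2 * ((j : ℤ) - (k : ℤ)) - 1 ≤ (T (j - 1) 0 : ℤ) := by
  set L := μ.colLen 0 with hLdef
  have hmem : ∀ m, m < L → (m, 0) ∈ μ := fun m hm => YoungDiagram.mem_iff_lt_colLen.mpr hm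
  have hmono : ∀ m1 m2, m1 ≤ m2 → m2 < L → T m1 0 ≤ T m2 0 := fun m1 m2 h hm =>
    T.col_weak h (hmem _ hm)
  have hinj : Set.InjOn (fun m => T m 0) ↑(Finset.range L) := by
    intro a ha b hb hab
    simp only [Finset.coe_range, Set.mem_Iio] at ha hb
    by_contra hne
    rcases Nat.lt_or_ge a b with h | h
    · exact absurd hab (T.col_strict h (hmem _ hb)).ne
    · exact absurd hab.symm (T.col_strict (lt_of_le_of_ne h (Ne.symm hne)) (hmem _ ha)).ne
  have hcard : ∀ (B : ℤ),
      ((colEntries T 0).filter fun x : ℕ => (x : ℤ) < B).card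
        = ((Finset.range L).filter fun m => (T m 0 : ℤ) < B).card := by
    intro B
    have : (colEntries T 0).filter (fun x : ℕ => (x : ℤ) < B)
        = ((Finset.range L).filter fun m => ((T m 0 : ℤ) < B)).image (fun m => T m 0) := by
      rw [colEntries, Finset.filter_image]
    rw [this]
    exact Finset.card_image_of_injOn (hinj.mono (by
      intro x hx
      simpa using (Finset.mem_filter.mp hx).1))
  have hLk : L ≤ k := hℓ.trans (min_le_right _ _)
  have hdiv : 2 * (n / 2) + n % 2 = n := Nat.div_add_mod' n 2 ▸ by omega
  constructor
  · rintro ⟨-, hQ⟩ j hj1 hjL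
    have hTj1 : 1 ≤ T (j - 1) 0 := (hT _ _ (hmem _ (by omega))).1
    by_cases hcase : k - n / 2 < j
    · by_contra hlt
      push_neg at hlt
      have hup := hQ j hcase (hjL.trans hLk)
      rw [hcard] at hup
      have hsub : Finset.range j ⊆
          (Finset.range L).filter fun m => (T m 0 : ℤ) < (n : ℤ) - 1 - 2 * k + 2 * j := by
        intro m hm
        rw [Finset.mem_range] at hm
        refine Finset.mem_filter.mpr ⟨Finset.mem_range.mpr (by omega), ?_⟩
        have := hmono m (j - 1) (by omega) (by omega)
        have hc : ((T m 0 : ℕ) : ℤ) ≤ ((T (j - 1) 0 : ℕ) : ℤ) := by exact_mod_cast this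
        omega
      have := Finset.card_le_card hsub
      rw [Finset.card_range] at this
      omega
    · -- j ≤ k - n/2, so the bound is ≤ 0 < 1 ≤ T
      have : j + n / 2 ≤ k := by omega
      omega
  · intro hR
    refine ⟨hT, ?_⟩
    intro i hi1 hi2
    rw [hcard]
    by_cases hiL : i ≤ L
    · have hi0 : 1 ≤ i := by omega
      have hRi := hR i hi0 hiL
      have hsub : ((Finset.range L).filter fun m => (T m 0 : ℤ) < (n : ℤ) - 1 - 2 * k + 2 * i)
          ⊆ Finset.range (i - 1) := by
        intro m hm
        rw [Finset.mem_filter, Finset.mem_range] at hm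
        rw [Finset.mem_range]
        by_contra hge
        push_neg at hge
        have := hmono (i - 1) m hge hm.1
        have hc : ((T (i-1) 0 : ℕ) : ℤ) ≤ ((T m 0 : ℕ) : ℤ) := by exact_mod_cast this
        omega
      have := Finset.card_le_card hsub
      rw [Finset.card_range] at this
      omega
    · have := Finset.card_le_card (Finset.filter_subset
        (fun m => (T m 0 : ℤ) < (n : ℤ) - 1 - 2 * k + 2 * i) (Finset.range L))
      rw [Finset.card_range] at this
      omega
end

section
/- Let p, q, k be positive integers with k ≤ min(p,q), and let σ = (σ⁺,σ⁻) be a pair of partitions with ℓ(σ⁺) ≤ q, ℓ(σ⁻) ≤ p and ℓ(σ⁺)+ℓ(σ⁻) ≤ k. Then the map sending (T⁺,T⁻) to the pair obtained by subtracting q−k from every entry of T⁺ and subtracting p−k from every entry of T⁻ is a well-defined bijection from 𝒬_k(σ) onto the set of pairs (U⁺,U⁻) ∈ SSYT(σ⁺,k) × SSYT(σ⁻,k) satisfying #{x ∈ U⁺_1 : x ≤ i} + #{y ∈ U⁻_1 : y ≤ i} ≤ i for all 1 ≤ i ≤ k (Stembridge's rational tableaux). -/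
/-- Stembridge's rational tableaux of shape `σ = (σ⁺, σ⁻)`: pairs
`(U⁺, U⁻) ∈ SSYT(σ⁺, k) × SSYT(σ⁻, k)` satisfying
`#{x ∈ U⁺₁ : x ≤ i} + #{y ∈ U⁻₁ : y ≤ i} ≤ i` for all `1 ≤ i ≤ k`. -/
def RatT (k : ℕ) (μp μm : YoungDiagram) :
    Set (SemistandardYoungTableau μp × SemistandardYoungTableau μm) :=
  { UU | EntriesIn UU.1 k ∧ EntriesIn UU.2 k ∧
    ∀ i : ℕ, 1 ≤ i → i ≤ k →
      ((colEntries UU.1 0).filter fun x => x ≤ i).card +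
      ((colEntries UU.2 0).filter fun y => y ≤ i).card ≤ i }

namespace Statement12Aux

open Finset

variable {μ : YoungDiagram}

/-- Add `c` to every entry of `T` (inside the diagram). -/
def shiftUp (c : ℕ) (T : SemistandardYoungTableau μ) : SemistandardYoungTableau μ where
  entry i j := if (i, j) ∈ μ then T i j + c else 0
  row_weak' := by
    intro i j1 j2 hj hm
    have hm1 : (i, j1) ∈ μ := μ.up_left_mem le_rfl hj.le hm
    simp only [if_pos hm1, if_pos hm]
    exact Nat.add_le_add_right (T.row_weak hj hm) c
  col_strict' := by
    intro i1 i2 j hi hm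
    have hm1 : (i1, j) ∈ μ := μ.up_left_mem hi.le le_rfl hm
    simp only [if_pos hm1, if_pos hm]
    exact Nat.add_lt_add_right (T.col_strict hi hm) c
  zeros' := fun h => if_neg h

/-- Subtract `c` from every entry of `T`, assuming all entries exceed `c`. -/
def shiftDown (c : ℕ) (T : SemistandardYoungTableau μ)
    (h : ∀ i j, (i, j) ∈ μ → c < T i j) : SemistandardYoungTableau μ where
  entry i j := if (i, j) ∈ μ then T i j - c else 0
  row_weak' := by
    intro i j1 j2 hj hm
    have hm1 : (i, j1) ∈ μ := μ.up_left_mem le_rfl hj.le hm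
    simp only [if_pos hm1, if_pos hm]
    exact Nat.sub_le_sub_right (T.row_weak hj hm) c
  col_strict' := by
    intro i1 i2 j hi hm
    have hm1 : (i1, j) ∈ μ := μ.up_left_mem hi.le le_rfl hm
    simp only [if_pos hm1, if_pos hm]
    have h1 := h i1 j hm1
    have h2 := T.col_strict hi hm
    omega
  zeros' := fun h => if_neg h

theorem shiftUp_entry (c : ℕ) (T : SemistandardYoungTableau μ) {i j : ℕ} (hm : (i, j) ∈ μ) :
    shiftUp c T i j = T i j + c := if_pos hm

theorem shiftDown_entry (c : ℕ) (T : SemistandardYoungTableau μ)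
    (h : ∀ i j, (i, j) ∈ μ → c < T i j) {i j : ℕ} (hm : (i, j) ∈ μ) :
    shiftDown c T h i j = T i j - c := if_pos hm

theorem card_filter_colEntries (T : SemistandardYoungTableau μ) (P : ℕ → Prop) [DecidablePred P] :
    ((colEntries T 0).filter P).card
      = ((Finset.range (μ.colLen 0)).filter fun r => P (T r 0)).card := by
  rw [colEntries, Finset.filter_image]
  apply Finset.card_image_of_injOn
  intro r1 h1 r2 h2 hEq
  simp only [Finset.mem_coe, Finset.mem_filter, Finset.mem_range] at h1 h2
  have hEq' : T r1 0 = T r2 0 := hEq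
  by_contra hne
  rcases Nat.lt_or_ge r1 r2 with h | h
  · have := T.col_strict h (YoungDiagram.mem_iff_lt_colLen.mpr h2.1)
    omega
  · have hlt : r2 < r1 := by omega
    have := T.col_strict hlt (YoungDiagram.mem_iff_lt_colLen.mpr h1.1)
    omega

theorem card_filter_colEntries_congr (T T' : SemistandardYoungTableau μ)
    (P P' : ℕ → Prop) [DecidablePred P] [DecidablePred P']
    (hent : ∀ r, (r, 0) ∈ μ → (P (T r 0) ↔ P' (T' r 0))) :
    ((colEntries T 0).filter P).card = ((colEntries T' 0).filter P').card := by
  rw [card_filter_colEntries, card_filter_colEntries]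
  congr 1
  apply Finset.filter_congr
  intro r hr
  simpa using hent r (YoungDiagram.mem_iff_lt_colLen.mpr (Finset.mem_range.mp hr))

theorem card_filter_colEntries_le (T : SemistandardYoungTableau μ)
    (P : ℕ → Prop) [DecidablePred P] :
    ((colEntries T 0).filter P).card ≤ μ.colLen 0 := by
  calc ((colEntries T 0).filter P).card ≤ (colEntries T 0).card := Finset.card_filter_le _ _
    _ ≤ (Finset.range (μ.colLen 0)).card := Finset.card_image_le
    _ = μ.colLen 0 := Finset.card_range _

theorem lower_bound (T : SemistandardYoungTableau μ) (C : ℤ)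
    (h : ((colEntries T 0).filter fun x : ℕ => (x : ℤ) < C).card = 0) :
    ∀ i j, (i, j) ∈ μ → C ≤ (T i j : ℤ) := by
  intro i j hm
  rw [Finset.card_eq_zero, Finset.filter_eq_empty_iff] at h
  have hm0 : (i, 0) ∈ μ := μ.up_left_mem le_rfl (Nat.zero_le j) hm
  have hcol : T i 0 ∈ colEntries T 0 := by
    apply Finset.mem_image_of_mem
    exact Finset.mem_range.mpr (YoungDiagram.mem_iff_lt_colLen.mp hm0)
  have h0 := h hcol
  have hle : T i 0 ≤ T i j := by
    rcases Nat.eq_zero_or_pos j with rfl | hj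
    · exact le_rfl
    · exact T.row_weak hj hm
  push_neg at h0
  have : (T i 0 : ℤ) ≤ (T i j : ℤ) := by exact_mod_cast hle
  omega

end Statement12Aux

open Statement12Aux in
/-- For `k ≤ min p q`, the map subtracting `q - k` from every entry of `T⁺` and
`p - k` from every entry of `T⁻` is a well-defined bijection from `𝒬_k(σ)` onto
Stembridge's rational tableaux of shape `σ`. -/
theorem statement12 (p q k : ℕ) (hp : 0 < p) (hq : 0 < q) (hk : 0 < k)
    (hkr : k ≤ min p q)
    (μp μm : YoungDiagram) (hμp : μp.colLen 0 ≤ q) (hμm : μm.colLen 0 ≤ p)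
    (hsum : μp.colLen 0 + μm.colLen 0 ≤ k) :
    ∃ e : ↥(QU p q k μp μm) ≃ ↥(RatT k μp μm),
      ∀ TT : ↥(QU p q k μp μm),
        (∀ i j : ℕ, (i, j) ∈ μp →
          ((e TT).val.1 i j : ℤ) = (TT.val.1 i j : ℤ) - ((q : ℤ) - (k : ℤ))) ∧
        (∀ i j : ℕ, (i, j) ∈ μm →
          ((e TT).val.2 i j : ℤ) = (TT.val.2 i j : ℤ) - ((p : ℤ) - (k : ℤ))) := by
  have hkp : k ≤ p := le_trans hkr (min_le_left _ _)
  have hkq : k ≤ q := le_trans hkr (min_le_right _ _)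
  have hmin : k - min p q = 0 := Nat.sub_eq_zero_of_le hkr
  -- lower bounds for members of QU
  have low1 : ∀ TT : SemistandardYoungTableau μp × SemistandardYoungTableau μm,
      TT ∈ QU p q k μp μm → ∀ i j, (i, j) ∈ μp → q - k < TT.1 i j := by
    intro TT hTT i j hm
    obtain ⟨h1, h2, h3⟩ := hTT
    have h4 := h3 1 (by omega) hk
    have hc : ((colEntries TT.1 0).filter fun x : ℕ =>
        (x : ℤ) < (q : ℤ) - (k : ℤ) + ((1 : ℕ) : ℤ)).card = 0 := by omega
    have := lower_bound TT.1 ((q : ℤ) - (k : ℤ) + ((1 : ℕ) : ℤ)) hc i j hm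
    omega
  have low2 : ∀ TT : SemistandardYoungTableau μp × SemistandardYoungTableau μm,
      TT ∈ QU p q k μp μm → ∀ i j, (i, j) ∈ μm → p - k < TT.2 i j := by
    intro TT hTT i j hm
    obtain ⟨h1, h2, h3⟩ := hTT
    have h4 := h3 1 (by omega) hk
    have hc : ((colEntries TT.2 0).filter fun y : ℕ =>
        (y : ℤ) < (p : ℤ) - (k : ℤ) + ((1 : ℕ) : ℤ)).card = 0 := by omega
    have := lower_bound TT.2 ((p : ℤ) - (k : ℤ) + ((1 : ℕ) : ℤ)) hc i j hm
    omega
  -- forward membership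
  have mem1 : ∀ TT (hTT : TT ∈ QU p q k μp μm),
      ((shiftDown (q - k) TT.1 (low1 TT hTT), shiftDown (p - k) TT.2 (low2 TT hTT)) :
        SemistandardYoungTableau μp × SemistandardYoungTableau μm) ∈ RatT k μp μm := by
    intro TT hTT
    obtain ⟨h1, h2, h3⟩ := hTT
    refine ⟨?_, ?_, ?_⟩
    · intro i j hm
      rw [shiftDown_entry _ _ _ hm]
      have := (h1 i j hm).2
      have := low1 TT ⟨h1, h2, h3⟩ i j hm
      omega
    · intro i j hm
      rw [shiftDown_entry _ _ _ hm]
      have := (h2 i j hm).2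
      have := low2 TT ⟨h1, h2, h3⟩ i j hm
      omega
    · intro i hi1 hik
      dsimp only
      rcases Nat.lt_or_ge i k with hik' | hik'
      · -- use the QU condition at i + 1
        have h4 := h3 (i + 1) (by omega) (by omega)
        have e1 : ((colEntries
              (shiftDown (q - k) TT.1 (low1 TT ⟨h1, h2, h3⟩)) 0).filter fun x => x ≤ i).card
            = ((colEntries TT.1 0).filter fun x : ℕ =>
                (x : ℤ) < (q : ℤ) - (k : ℤ) + (((i + 1 : ℕ)) : ℤ)).card := by
          apply card_filter_colEntries_congr
          intro r hr
          simp only [shiftDown_entry _ _ _ hr]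
          have := low1 TT ⟨h1, h2, h3⟩ r 0 hr
          omega
        have e2 : ((colEntries
              (shiftDown (p - k) TT.2 (low2 TT ⟨h1, h2, h3⟩)) 0).filter fun x => x ≤ i).card
            = ((colEntries TT.2 0).filter fun y : ℕ =>
                (y : ℤ) < (p : ℤ) - (k : ℤ) + (((i + 1 : ℕ)) : ℤ)).card := by
          apply card_filter_colEntries_congr
          intro r hr
          simp only [shiftDown_entry _ _ _ hr]
          have := low2 TT ⟨h1, h2, h3⟩ r 0 hr
          omega
        rw [e1, e2]
        omega
      · -- i ≥ k : trivial bound via column lengths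
        have c1 := card_filter_colEntries_le
          (shiftDown (q - k) TT.1 (low1 TT ⟨h1, h2, h3⟩)) (fun x => x ≤ i)
        have c2 := card_filter_colEntries_le
          (shiftDown (p - k) TT.2 (low2 TT ⟨h1, h2, h3⟩)) (fun x => x ≤ i)
        omega
  -- backward membership
  have mem2 : ∀ UU : SemistandardYoungTableau μp × SemistandardYoungTableau μm,
      UU ∈ RatT k μp μm →
      ((shiftUp (q - k) UU.1, shiftUp (p - k) UU.2) :
        SemistandardYoungTableau μp × SemistandardYoungTableau μm) ∈ QU p q k μp μm := by
    intro UU hUU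
    obtain ⟨h1, h2, h3⟩ := hUU
    refine ⟨?_, ?_, ?_⟩
    · intro i j hm
      rw [shiftUp_entry _ _ hm]
      have := h1 i j hm
      omega
    · intro i j hm
      rw [shiftUp_entry _ _ hm]
      have := h2 i j hm
      omega
    · intro i hi0 hik
      dsimp only
      have hi1 : 1 ≤ i := by omega
      rcases Nat.lt_or_ge 1 i with hi2 | hi2
      · -- i ≥ 2: use the RatT condition at i - 1
        have h4 := h3 (i - 1) (by omega) (by omega)
        have e1 : ((colEntries (shiftUp (q - k) UU.1) 0).filter fun x : ℕ =>
              (x : ℤ) < (q : ℤ) - (k : ℤ) + (i : ℤ)).card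
            = ((colEntries UU.1 0).filter fun x => x ≤ i - 1).card := by
          apply card_filter_colEntries_congr
          intro r hr
          simp only [shiftUp_entry _ _ hr]
          omega
        have e2 : ((colEntries (shiftUp (p - k) UU.2) 0).filter fun y : ℕ =>
              (y : ℤ) < (p : ℤ) - (k : ℤ) + (i : ℤ)).card
            = ((colEntries UU.2 0).filter fun y => y ≤ i - 1).card := by
          apply card_filter_colEntries_congr
          intro r hr
          simp only [shiftUp_entry _ _ hr]
          omega
        rw [e1, e2]
        omega
      · -- i = 1: both filters are empty since all entries are ≥ 1
        have hi : i = 1 := by omega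
        subst hi
        have e1 : ((colEntries (shiftUp (q - k) UU.1) 0).filter fun x : ℕ =>
              (x : ℤ) < (q : ℤ) - (k : ℤ) + ((1 : ℕ) : ℤ)).card
            = ((colEntries UU.1 0).filter fun _ => False).card := by
          apply card_filter_colEntries_congr
          intro r hr
          simp only [shiftUp_entry _ _ hr, iff_false, not_lt]
          have := (h1 r 0 hr).1
          omega
        have e2 : ((colEntries (shiftUp (p - k) UU.2) 0).filter fun y : ℕ =>
              (y : ℤ) < (p : ℤ) - (k : ℤ) + ((1 : ℕ) : ℤ)).card
            = ((colEntries UU.2 0).filter fun _ => False).card := by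
          apply card_filter_colEntries_congr
          intro r hr
          simp only [shiftUp_entry _ _ hr, iff_false, not_lt]
          have := (h2 r 0 hr).1
          omega
        rw [e1, e2]
        simp
  refine ⟨⟨fun TT => ⟨(shiftDown (q - k) TT.1.1 (low1 TT.1 TT.2),
                       shiftDown (p - k) TT.1.2 (low2 TT.1 TT.2)), mem1 TT.1 TT.2⟩,
          fun UU => ⟨(shiftUp (q - k) UU.1.1, shiftUp (p - k) UU.1.2), mem2 UU.1 UU.2⟩,
          ?_, ?_⟩, ?_⟩
  · -- left inverse
    intro TT
    apply Subtype.ext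
    apply Prod.ext
    · show shiftUp (q - k) (shiftDown (q - k) TT.1.1 (low1 TT.1 TT.2)) = TT.1.1
      ext i j
      by_cases hm : (i, j) ∈ μp
      · rw [shiftUp_entry _ _ hm, shiftDown_entry _ _ _ hm]
        have := low1 TT.1 TT.2 i j hm
        omega
      · exact ((shiftUp _ _).zeros' hm).trans (TT.1.1.zeros' hm).symm
    · show shiftUp (p - k) (shiftDown (p - k) TT.1.2 (low2 TT.1 TT.2)) = TT.1.2
      ext i j
      by_cases hm : (i, j) ∈ μm
      · rw [shiftUp_entry _ _ hm, shiftDown_entry _ _ _ hm]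
        have := low2 TT.1 TT.2 i j hm
        omega
      · exact ((shiftUp _ _).zeros' hm).trans (TT.1.2.zeros' hm).symm
  · -- right inverse
    intro UU
    apply Subtype.ext
    apply Prod.ext
    · show shiftDown (q - k) (shiftUp (q - k) UU.1.1)
          (low1 (shiftUp (q - k) UU.1.1, shiftUp (p - k) UU.1.2) (mem2 UU.1 UU.2)) = UU.1.1
      ext i j
      by_cases hm : (i, j) ∈ μp
      · rw [shiftDown_entry _ _ _ hm, shiftUp_entry _ _ hm]
        omega
      · exact ((shiftDown _ _ _).zeros' hm).trans (UU.1.1.zeros' hm).symm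
    · show shiftDown (p - k) (shiftUp (p - k) UU.1.2)
          (low2 (shiftUp (q - k) UU.1.1, shiftUp (p - k) UU.1.2) (mem2 UU.1 UU.2)) = UU.1.2
      ext i j
      by_cases hm : (i, j) ∈ μm
      · rw [shiftDown_entry _ _ _ hm, shiftUp_entry _ _ hm]
        omega
      · exact ((shiftDown _ _ _).zeros' hm).trans (UU.1.2.zeros' hm).symm
  · -- the defining property
    intro TT
    constructor
    · intro i j hm
      show ((shiftDown (q - k) TT.1.1 (low1 TT.1 TT.2) i j : ℕ) : ℤ)
          = (TT.1.1 i j : ℤ) - ((q : ℤ) - (k : ℤ))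
      rw [shiftDown_entry _ _ _ hm]
      have := low1 TT.1 TT.2 i j hm
      omega
    · intro i j hm
      show ((shiftDown (p - k) TT.1.2 (low2 TT.1 TT.2) i j : ℕ) : ℤ)
          = (TT.1.2 i j : ℤ) - ((p : ℤ) - (k : ℤ))
      rw [shiftDown_entry _ _ _ hm]
      have := low2 TT.1 TT.2 i j hm
      omega
end

section
/- Let n, k be positive integers with k ≤ n, and let σ be a partition with ℓ(σ) ≤ n and σ′_1 + σ′_2 ≤ k. Then the map sending T to the tableau obtained by subtracting n−k from every entry of T is a well-defined bijection from 𝒬_k(σ) onto the set of U ∈ SSYT(σ,k) such that, for all 1 ≤ i ≤ k, the number of entries x (counted with multiplicity) in columns 1 and 2 of U with x ≤ i is at most i (Proctor's orthogonal tableaux). -/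
/-- Proctor's orthogonal tableaux of shape `σ`: tableaux `U ∈ SSYT(σ, k)` such that
for all `1 ≤ i ≤ k`, the number of entries `x` (counted with multiplicity) in
columns 1 and 2 of `U` with `x ≤ i` is at most `i`. -/
def OrthT (k : ℕ) (μ : YoungDiagram) : Set (SemistandardYoungTableau μ) :=
  { U | EntriesIn U k ∧
    ∀ i : ℕ, 1 ≤ i → i ≤ k →
      ((Finset.range (μ.colLen 0)).filter fun r => U r 0 ≤ i).card +
      ((Finset.range (μ.colLen 1)).filter fun r => U r 1 ≤ i).card ≤ i }

/-- Subtract `d` from every entry of a tableau all of whose entries (on cells) exceed `d`. -/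
def lowerTab {μ : YoungDiagram} (d : ℕ) (T : SemistandardYoungTableau μ)
    (hlow : ∀ i j, (i, j) ∈ μ → d < T i j) : SemistandardYoungTableau μ where
  entry i j := T i j - d
  row_weak' h hc := Nat.sub_le_sub_right (T.row_weak h hc) d
  col_strict' {i1 i2 j} h hc := by
    have hc1 : (i1, j) ∈ μ := μ.up_left_mem (le_of_lt h) le_rfl hc
    have h1 := hlow _ _ hc1
    have h2 := T.col_strict h hc
    show T i1 j - d < T i2 j - d
    omega
  zeros' h := by simp [T.zeros h]

@[simp] theorem lowerTab_apply {μ : YoungDiagram} (d : ℕ) (T : SemistandardYoungTableau μ)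
    (hlow : ∀ i j, (i, j) ∈ μ → d < T i j) (i j : ℕ) : lowerTab d T hlow i j = T i j - d := rfl

/-- Add `d` to every entry of a tableau (on cells of `μ`). -/
def raiseTab {μ : YoungDiagram} (d : ℕ) (U : SemistandardYoungTableau μ) :
    SemistandardYoungTableau μ where
  entry i j := if (i, j) ∈ μ then U i j + d else 0
  row_weak' {i j1 j2} h hc := by
    have hc1 : (i, j1) ∈ μ := μ.up_left_mem le_rfl (le_of_lt h) hc
    simp only [if_pos hc, if_pos hc1]
    exact Nat.add_le_add_right (U.row_weak h hc) d
  col_strict' {i1 i2 j} h hc := by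
    have hc1 : (i1, j) ∈ μ := μ.up_left_mem (le_of_lt h) le_rfl hc
    simp only [if_pos hc, if_pos hc1]
    exact Nat.add_lt_add_right (U.col_strict h hc) d
  zeros' h := if_neg h

@[simp] theorem raiseTab_apply {μ : YoungDiagram} (d : ℕ) (U : SemistandardYoungTableau μ)
    (i j : ℕ) : raiseTab d U i j = if (i, j) ∈ μ then U i j + d else 0 := rfl

/-- Every entry of a tableau in `𝒬_k(σ)` exceeds `n - k`. -/
theorem qo_low {n k : ℕ} (hk : 0 < k) (hkn : k ≤ n) {μ : YoungDiagram}
    {T : SemistandardYoungTableau μ} (hT : T ∈ QO n k μ) :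
    ∀ i j, (i, j) ∈ μ → n - k < T i j := by
  intro i j hc
  have h1 := hT.2 1 (by omega) hk
  have hc0 : (i, 0) ∈ μ := μ.up_left_mem le_rfl (Nat.zero_le j) hc
  have hi0 : i ∈ Finset.range (μ.colLen 0) := by
    simpa [Finset.mem_range] using YoungDiagram.mem_iff_lt_colLen.mp hc0
  have hnot : ¬ ((T i 0 : ℤ) < (n : ℤ) - (k : ℤ) + (1 : ℕ)) := by
    intro hlt
    have hmem : i ∈ (Finset.range (μ.colLen 0)).filter fun r =>
        (T r 0 : ℤ) < (n : ℤ) - (k : ℤ) + ((1 : ℕ) : ℤ) := by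
      exact Finset.mem_filter.mpr ⟨hi0, hlt⟩
    have := Finset.card_pos.mpr ⟨i, hmem⟩
    omega
  have hle : T i 0 ≤ T i j := T.row_weak_of_le (Nat.zero_le j) hc
  push_cast at hnot
  omega

/-- For `k ≤ n`, the map subtracting `n - k` from every entry is a well-defined
bijection from `𝒬_k(σ)` onto Proctor's orthogonal tableaux of shape `σ`. -/
theorem statement13 (n k : ℕ) (hn : 0 < n) (hk : 0 < k) (hkn : k ≤ n)
    (μ : YoungDiagram) (hℓ : μ.colLen 0 ≤ n) (hcols : μ.colLen 0 + μ.colLen 1 ≤ k) :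
    ∃ e : ↥(QO n k μ) ≃ ↥(OrthT k μ),
      ∀ T : ↥(QO n k μ), ∀ i j : ℕ, (i, j) ∈ μ →
        ((e T).val i j : ℤ) = (T.val i j : ℤ) - ((n : ℤ) - (k : ℤ)) := by
  -- the forward map lands in `OrthT`
  have hfwd : ∀ (T : SemistandardYoungTableau μ) (hT : T ∈ QO n k μ),
      lowerTab (n - k) T (qo_low hk hkn hT) ∈ OrthT k μ := by
    intro T hT
    have hlow := qo_low hk hkn hT
    constructor
    · intro i j hc
      have h1 := hlow i j hc
      have h2 := (hT.1 i j hc).2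
      simp only [lowerTab_apply]
      omega
    · intro i hi1 hik
      rcases lt_or_ge i k with hlt | hge
      swap
      ·
        have c0 : ((Finset.range (μ.colLen 0)).filter fun r =>
            lowerTab (n - k) T hlow r 0 ≤ i).card ≤ μ.colLen 0 :=
          (Finset.card_filter_le _ _).trans (Finset.card_range _).le
        have c1 : ((Finset.range (μ.colLen 1)).filter fun r =>
            lowerTab (n - k) T hlow r 1 ≤ i).card ≤ μ.colLen 1 :=
          (Finset.card_filter_le _ _).trans (Finset.card_range _).le
        omega
      · have h := hT.2 (i + 1) (by omega) (by omega)
        have e0 : ((Finset.range (μ.colLen 0)).filter fun r =>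
              lowerTab (n - k) T hlow r 0 ≤ i) =
            ((Finset.range (μ.colLen 0)).filter fun r =>
              (T r 0 : ℤ) < (n : ℤ) - (k : ℤ) + ((i + 1 : ℕ) : ℤ)) := by
          apply Finset.filter_congr
          intro r hr
          have hc : (r, 0) ∈ μ := YoungDiagram.mem_iff_lt_colLen.mpr (Finset.mem_range.mp hr)
          have h1 := hlow r 0 hc
          have h2 := (hT.1 r 0 hc).2
          simp only [lowerTab_apply, eq_iff_iff]
          omega
        have e1 : ((Finset.range (μ.colLen 1)).filter fun r =>
              lowerTab (n - k) T hlow r 1 ≤ i) =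
            ((Finset.range (μ.colLen 1)).filter fun r =>
              (T r 1 : ℤ) < (n : ℤ) - (k : ℤ) + ((i + 1 : ℕ) : ℤ)) := by
          apply Finset.filter_congr
          intro r hr
          have hc : (r, 1) ∈ μ := YoungDiagram.mem_iff_lt_colLen.mpr (Finset.mem_range.mp hr)
          have h1 := hlow r 1 hc
          have h2 := (hT.1 r 1 hc).2
          simp only [lowerTab_apply, eq_iff_iff]
          omega
        rw [e0, e1]
        omega
  -- the backward map lands in `QO`
  have hbwd : ∀ (U : SemistandardYoungTableau μ), U ∈ OrthT k μ →
      raiseTab (n - k) U ∈ QO n k μ := by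
    intro U hU
    constructor
    · intro i j hc
      have h1 := hU.1 i j hc
      simp only [raiseTab_apply, if_pos hc]
      omega
    · intro i hi1 hik
      have hi1' : 1 ≤ i := by omega
      have e0 : ((Finset.range (μ.colLen 0)).filter fun r =>
            (raiseTab (n - k) U r 0 : ℤ) < (n : ℤ) - (k : ℤ) + (i : ℤ)) =
          ((Finset.range (μ.colLen 0)).filter fun r => U r 0 ≤ i - 1) := by
        apply Finset.filter_congr
        intro r hr
        have hc : (r, 0) ∈ μ := YoungDiagram.mem_iff_lt_colLen.mpr (Finset.mem_range.mp hr)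
        have h1 := (hU.1 r 0 hc).1
        simp only [raiseTab_apply, if_pos hc, eq_iff_iff]
        omega
      have e1 : ((Finset.range (μ.colLen 1)).filter fun r =>
            (raiseTab (n - k) U r 1 : ℤ) < (n : ℤ) - (k : ℤ) + (i : ℤ)) =
          ((Finset.range (μ.colLen 1)).filter fun r => U r 1 ≤ i - 1) := by
        apply Finset.filter_congr
        intro r hr
        have hc : (r, 1) ∈ μ := YoungDiagram.mem_iff_lt_colLen.mpr (Finset.mem_range.mp hr)
        have h1 := (hU.1 r 1 hc).1
        simp only [raiseTab_apply, if_pos hc, eq_iff_iff]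
        omega
      rw [e0, e1]
      rcases eq_or_lt_of_le hi1' with rfl | h2le
      · have z0 : ((Finset.range (μ.colLen 0)).filter fun r => U r 0 ≤ 1 - 1) = ∅ := by
          apply Finset.filter_false_of_mem
          intro r hr
          have hc : (r, 0) ∈ μ := YoungDiagram.mem_iff_lt_colLen.mpr (Finset.mem_range.mp hr)
          have h1 := (hU.1 r 0 hc).1
          omega
        have z1 : ((Finset.range (μ.colLen 1)).filter fun r => U r 1 ≤ 1 - 1) = ∅ := by
          apply Finset.filter_false_of_mem
          intro r hr
          have hc : (r, 1) ∈ μ := YoungDiagram.mem_iff_lt_colLen.mpr (Finset.mem_range.mp hr)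
          have h1 := (hU.1 r 1 hc).1
          omega
        rw [z0, z1]
        simp
      · have h := hU.2 (i - 1) (by omega) (by omega)
        omega
  refine ⟨⟨fun T => ⟨lowerTab (n - k) T.1 (qo_low hk hkn T.2), hfwd T.1 T.2⟩,
      fun U => ⟨raiseTab (n - k) U.1, hbwd U.1 U.2⟩, ?_, ?_⟩, ?_⟩
  · rintro ⟨T, hT⟩
    have hlow := qo_low hk hkn hT
    ext i j
    by_cases hc : (i, j) ∈ μ
    · have h1 := hlow i j hc
      simp only [raiseTab_apply, lowerTab_apply, if_pos hc]
      omega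
    · simp only [raiseTab_apply, if_neg hc, T.zeros hc]
  · rintro ⟨U, hU⟩
    ext i j
    by_cases hc : (i, j) ∈ μ
    · simp only [lowerTab_apply, raiseTab_apply, if_pos hc]
      omega
    · simp only [lowerTab_apply, raiseTab_apply, if_neg hc, U.zeros hc]
      omega
  · rintro ⟨T, hT⟩ i j hc
    have h1 := qo_low hk hkn hT i j hc
    simp only [Equiv.coe_fn_mk, lowerTab_apply]
    push_cast
    omega
end

section
/- Let n, k be positive integers with 2k ≤ n, and let σ be a partition with ℓ(σ) ≤ k. Then the map sending T to the tableau obtained by subtracting n−2k from every entry of T is a well-defined bijection from 𝒬_k(σ) onto the set of U ∈ SSYT(σ,2k) such that #{x ∈ U_1 : x ≤ 2i} ≤ i for all 1 ≤ i ≤ k (Proctor's symplectic tableaux). -/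
/-- Proctor's symplectic tableaux of shape `σ`: tableaux `U ∈ SSYT(σ, 2k)` such that
`#{x ∈ U₁ : x ≤ 2i} ≤ i` for all `1 ≤ i ≤ k`. -/
def SympT (k : ℕ) (μ : YoungDiagram) : Set (SemistandardYoungTableau μ) :=
  { U | EntriesIn U (2 * k) ∧
    ∀ i : ℕ, 1 ≤ i → i ≤ k →
      ((colEntries U 0).filter fun x => x ≤ 2 * i).card ≤ i }

namespace Statement14Aux

open Finset

/-- Add `d` to all entries of `U`. -/
def shiftUp {μ : YoungDiagram} (U : SemistandardYoungTableau μ) (d : ℕ) :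
    SemistandardYoungTableau μ where
  entry i j := if (i, j) ∈ μ then U i j + d else 0
  row_weak' := by
    intro i j1 j2 h hm
    have h1 : (i, j1) ∈ μ := μ.up_left_mem le_rfl h.le hm
    simp only [if_pos h1, if_pos hm]
    exact add_le_add_left (U.row_weak h hm) d
  col_strict' := by
    intro i1 i2 j h hm
    have h1 : (i1, j) ∈ μ := μ.up_left_mem h.le le_rfl hm
    simp only [if_pos h1, if_pos hm]
    exact add_lt_add_left (U.col_strict h hm) d
  zeros' := by intro i j h; simp [h]

@[simp] lemma shiftUp_apply {μ : YoungDiagram} (U : SemistandardYoungTableau μ) (d : ℕ)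
    (i j : ℕ) : shiftUp U d i j = if (i, j) ∈ μ then U i j + d else 0 := rfl

/-- Subtract `d` from all entries of `T`, assuming all entries exceed `d`. -/
def shiftDown {μ : YoungDiagram} (T : SemistandardYoungTableau μ) (d : ℕ)
    (hT : ∀ i j, (i, j) ∈ μ → d < T i j) : SemistandardYoungTableau μ where
  entry i j := if (i, j) ∈ μ then T i j - d else 0
  row_weak' := by
    intro i j1 j2 h hm
    have h1 : (i, j1) ∈ μ := μ.up_left_mem le_rfl h.le hm
    have := T.row_weak h hm
    simp only [if_pos h1, if_pos hm]
    omega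
  col_strict' := by
    intro i1 i2 j h hm
    have h1 : (i1, j) ∈ μ := μ.up_left_mem h.le le_rfl hm
    have := T.col_strict h hm
    have := hT _ _ h1
    simp only [if_pos h1, if_pos hm]
    omega
  zeros' := by intro i j h; simp [h]

@[simp] lemma shiftDown_apply {μ : YoungDiagram} (T : SemistandardYoungTableau μ) (d : ℕ)
    (hT : ∀ i j, (i, j) ∈ μ → d < T i j) (i j : ℕ) :
    shiftDown T d hT i j = if (i, j) ∈ μ then T i j - d else 0 := rfl

lemma col_injOn {μ : YoungDiagram} (T : SemistandardYoungTableau μ) :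
    Set.InjOn (fun m => T m 0) ↑(range (μ.colLen 0)) := by
  intro a ha b hb hab
  simp only [coe_range, Set.mem_Iio] at ha hb
  by_contra hne
  rcases Nat.lt_or_ge a b with h | h
  · exact absurd hab (T.col_strict h (YoungDiagram.mem_iff_lt_colLen.2 hb)).ne
  · have h' : b < a := lt_of_le_of_ne h (Ne.symm hne)
    exact absurd hab.symm (T.col_strict h' (YoungDiagram.mem_iff_lt_colLen.2 ha)).ne

lemma card_filter_colEntries {μ : YoungDiagram} (T : SemistandardYoungTableau μ)
    (P : ℕ → Prop) [DecidablePred P] :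
    ((colEntries T 0).filter P).card
      = ((range (μ.colLen 0)).filter fun m => P (T m 0)).card := by
  classical
  rw [colEntries, Finset.filter_image]
  refine card_image_of_injOn ?_
  have hsub : ((range (μ.colLen 0)).filter fun a => P (T a 0)) ⊆ range (μ.colLen 0) :=
    Finset.filter_subset _ _
  exact (col_injOn T).mono (Finset.coe_subset.2 hsub)

/-- Basic fact: in a member of `QS n k μ`, all entries exceed `n - 2k`. -/
lemma qs_gt {n k : ℕ} (h2k : 2 * k ≤ n) {μ : YoungDiagram} (hℓ : μ.colLen 0 ≤ k)
    {T : SemistandardYoungTableau μ} (hT : T ∈ QS n k μ) :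
    ∀ i j : ℕ, (i, j) ∈ μ → n - 2 * k < T i j := by
  have hcol : ∀ r : ℕ, (r, 0) ∈ μ → n - 2 * k < T r 0 := by
    intro r hr
    by_contra hle
    push_neg at hle
    have hrlen : r < μ.colLen 0 := YoungDiagram.mem_iff_lt_colLen.1 hr
    have hkq : k ≤ n / 2 := by omega
    have hq := hT.2 (r + 1) (by omega) (by omega)
    have hsub : range (r + 1) ⊆
        (range (μ.colLen 0)).filter fun m =>
          ((T m 0 : ℤ) < (n : ℤ) - 1 - 2 * (k : ℤ) + 2 * ((r + 1 : ℕ) : ℤ)) := by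
      intro m hm
      simp only [mem_range] at hm
      have hmμ : (m, 0) ∈ μ := YoungDiagram.mem_iff_lt_colLen.2 (by omega)
      have hmono : T m 0 ≤ T r 0 := by
        rcases Nat.lt_or_ge m r with h | h
        · exact (T.col_strict h hr).le
        · have : m = r := by omega
          subst this; rfl
      simp only [mem_filter, mem_range]
      refine ⟨by omega, ?_⟩
      have h1 : (T m 0 : ℤ) ≤ (T r 0 : ℤ) := by exact_mod_cast hmono
      have h2 : (T r 0 : ℤ) ≤ ((n - 2 * k : ℕ) : ℤ) := by exact_mod_cast hle
      push_cast at h2 ⊢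
      omega
    have hcard := Finset.card_le_card hsub
    rw [card_range] at hcard
    rw [card_filter_colEntries] at hq
    omega
  intro i j hij
  have h0 : (i, 0) ∈ μ := μ.up_left_mem le_rfl (Nat.zero_le j) hij
  have := hcol i h0
  rcases Nat.eq_zero_or_pos j with hj | hj
  · subst hj; exact this
  · exact this.trans_le (T.row_weak' hj hij)

/-- The key count identity relating the two filtered cardinalities. -/
lemma count_eq {n k : ℕ} (h2k : 2 * k ≤ n) {μ : YoungDiagram}
    {T : SemistandardYoungTableau μ}
    (hd : ∀ i j : ℕ, (i, j) ∈ μ → n - 2 * k < T i j) (i : ℕ) :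
    ((colEntries (shiftDown T (n - 2 * k) hd) 0).filter fun x => x ≤ 2 * i).card
      = ((colEntries T 0).filter fun x : ℕ =>
          (x : ℤ) < (n : ℤ) - 1 - 2 * (k : ℤ) + 2 * ((i + 1 : ℕ) : ℤ)).card := by
  classical
  rw [card_filter_colEntries, card_filter_colEntries]
  congr 1
  apply Finset.filter_congr
  intro m hm
  simp only [mem_range] at hm
  have hmμ : (m, 0) ∈ μ := YoungDiagram.mem_iff_lt_colLen.2 hm
  have hgt := hd m 0 hmμ
  rw [shiftDown_apply, if_pos hmμ]
  constructor
  · intro h; push_cast; omega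
  · intro h; push_cast at h; omega

lemma card_colEntries_le {μ : YoungDiagram} (T : SemistandardYoungTableau μ) :
    (colEntries T 0).card ≤ μ.colLen 0 :=
  (Finset.card_image_le).trans (by simp)

end Statement14Aux

open Statement14Aux Finset in
/-- For `2k ≤ n`, the map subtracting `n - 2k` from every entry is a well-defined
bijection from `𝒬_k(σ)` onto Proctor's symplectic tableaux of shape `σ`. -/
theorem statement14 (n k : ℕ) (hn : 0 < n) (hk : 0 < k) (h2k : 2 * k ≤ n)
    (μ : YoungDiagram) (hℓ : μ.colLen 0 ≤ k) :
    ∃ e : ↥(QS n k μ) ≃ ↥(SympT k μ),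
      ∀ T : ↥(QS n k μ), ∀ i j : ℕ, (i, j) ∈ μ →
        ((e T).val i j : ℤ) = (T.val i j : ℤ) - ((n : ℤ) - 2 * (k : ℤ)) := by
  classical
  -- forward membership
  have fwd : ∀ T : SemistandardYoungTableau μ, ∀ hT : T ∈ QS n k μ,
      shiftDown T (n - 2 * k) (qs_gt h2k hℓ hT) ∈ SympT k μ := by
    intro T hT
    have hgt := qs_gt h2k hℓ hT
    constructor
    · intro i j hij
      rw [shiftDown_apply, if_pos hij]
      have h1 := hgt i j hij
      have h2 := (hT.1 i j hij).2
      omega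
    · intro i hi1 hik
      rcases Nat.lt_or_ge i k with hik' | hik'
      · -- use QS at i+1
        have hq := hT.2 (i + 1) (by omega) (by omega)
        rw [← count_eq h2k hgt i] at hq
        omega
      · -- i = k : trivial bound
        have hle1 : ((colEntries (shiftDown T (n - 2 * k) (qs_gt h2k hℓ hT)) 0).filter
              (fun x => x ≤ 2 * i)).card
            ≤ (colEntries (shiftDown T (n - 2 * k) (qs_gt h2k hℓ hT)) 0).card :=
          Finset.card_filter_le _ _
        have hle2 := card_colEntries_le (shiftDown T (n - 2 * k) (qs_gt h2k hℓ hT))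
        omega
  -- backward membership
  have bwd : ∀ U : SemistandardYoungTableau μ, U ∈ SympT k μ →
      shiftUp U (n - 2 * k) ∈ QS n k μ := by
    intro U hU
    have hent : ∀ i j : ℕ, (i, j) ∈ μ → n - 2 * k < shiftUp U (n - 2 * k) i j := by
      intro i j hij
      rw [shiftUp_apply, if_pos hij]
      have := (hU.1 i j hij).1
      omega
    constructor
    · intro i j hij
      rw [shiftUp_apply, if_pos hij]
      have h1 := (hU.1 i j hij).1
      have h2 := (hU.1 i j hij).2
      omega
    · intro i hi1 hik
      have hkq : k ≤ n / 2 := by omega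
      have hi1' : 1 ≤ i := by omega
      have heq : shiftDown (shiftUp U (n - 2 * k)) (n - 2 * k) hent = U := by
        ext a b
        rw [shiftDown_apply]
        by_cases hab : (a, b) ∈ μ
        · rw [if_pos hab, shiftUp_apply, if_pos hab]; omega
        · rw [if_neg hab, U.zeros hab]
      rcases Nat.lt_or_ge 1 i with hi2 | hi2
      · -- i = j + 1 with 1 ≤ j ≤ k - 1 : use Proctor at j
        obtain ⟨j, rfl⟩ : ∃ j, i = j + 1 := ⟨i - 1, by omega⟩
        have hp := hU.2 j (by omega) (by omega)
        have hce := count_eq h2k hent j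
        rw [heq] at hce
        omega
      · -- i = 1 : the filtered set is empty
        have : i = 1 := by omega
        subst this
        have hempty : ((colEntries (shiftUp U (n - 2 * k)) 0).filter fun x : ℕ =>
            (x : ℤ) < (n : ℤ) - 1 - 2 * (k : ℤ) + 2 * ((1 : ℕ) : ℤ)).card = 0 := by
          rw [Finset.card_eq_zero, Finset.filter_eq_empty_iff]
          intro x hx
          simp only [colEntries, mem_image, mem_range] at hx
          obtain ⟨m, hm, rfl⟩ := hx
          have hmμ : (m, 0) ∈ μ := YoungDiagram.mem_iff_lt_colLen.2 hm
          have h1 := hent m 0 hmμ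
          have h2 : ((shiftUp U (n - 2 * k)) m 0 : ℤ) ≥ ((n - 2 * k : ℕ) : ℤ) + 1 := by
            exact_mod_cast h1
          push_cast at h2 ⊢
          omega
        have : ((colEntries (shiftUp U (n - 2 * k)) 0).filter fun x : ℕ =>
            (x : ℤ) < (n : ℤ) - 1 - 2 * (k : ℤ) + 2 * ((1 : ℕ) : ℤ)).card < 1 := by
          omega
        exact_mod_cast this
  refine ⟨{
    toFun := fun T => ⟨shiftDown T.1 (n - 2 * k) (qs_gt h2k hℓ T.2), fwd T.1 T.2⟩
    invFun := fun U => ⟨shiftUp U.1 (n - 2 * k), bwd U.1 U.2⟩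
    left_inv := ?_
    right_inv := ?_ }, ?_⟩
  · intro T
    apply Subtype.ext
    ext a b
    rw [shiftUp_apply]
    by_cases hab : (a, b) ∈ μ
    · rw [if_pos hab, shiftDown_apply, if_pos hab]
      have := qs_gt h2k hℓ T.2 a b hab
      omega
    · rw [if_neg hab, (T.1.zeros hab)]
  · intro U
    apply Subtype.ext
    ext a b
    rw [shiftDown_apply]
    by_cases hab : (a, b) ∈ μ
    · rw [if_pos hab, shiftUp_apply, if_pos hab]; omega
    · rw [if_neg hab, (U.1.zeros hab)]
  · intro T i j hij
    simp only [Equiv.coe_fn_mk]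
    rw [shiftDown_apply, if_pos hij]
    have h1 := qs_gt h2k hℓ T.2 i j hij
    have h2 : ((T.val i j - (n - 2 * k) : ℕ) : ℤ)
        = (T.val i j : ℤ) - ((n - 2 * k : ℕ) : ℤ) := by
      exact_mod_cast Nat.cast_sub (by omega)
    rw [h2]
    push_cast
    omega
end

section
/- Let m, k be nonnegative integers. The set of plane partitions in the m-staircase bounded by k is equinumerous with the set of symmetric plane partitions in the m×m box bounded by k, i.e., functions Q : {1,…,m}×{1,…,m} → {0,1,…,k} satisfying Q(i,j) = Q(j,i) for all i,j, and Q(i,j) ≥ Q(i+1,j) and Q(i,j) ≥ Q(i,j+1) whenever both entries are defined. -/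
/-- A plane partition bounded by `k` contained in the diagram `D` (a finite set of
boxes, indexed 1-based). -/
def IsPP (D : Finset (ℕ × ℕ)) (k : ℕ) (P : ℕ × ℕ → ℕ) : Prop :=
  (∀ x ∈ D, P x ≤ k) ∧ (∀ x, x ∉ D → P x = 0) ∧
  (∀ i j : ℕ, (i, j) ∈ D → (i, j + 1) ∈ D → P (i, j) ≤ P (i, j + 1)) ∧
  (∀ i j : ℕ, (i, j) ∈ D → (i + 1, j) ∈ D → P (i + 1, j) ≤ P (i, j))

/-- The boxes of the `m`-staircase: pairs `(i, j)` of positive integers with `i + j ≤ m + 1`. -/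
def staircaseBoxes (m : ℕ) : Finset (ℕ × ℕ) :=
  (Finset.Icc 1 m ×ˢ Finset.Icc 1 m).filter fun x => x.1 + x.2 ≤ m + 1

/-- The boxes of the `m × m` box. -/
def squareBoxes (m : ℕ) : Finset (ℕ × ℕ) := Finset.Icc 1 m ×ˢ Finset.Icc 1 m

/-- A symmetric plane partition in the `m × m` box bounded by `k`: a function
`Q : {1,…,m} × {1,…,m} → {0,…,k}` (extended by zero) with `Q(i,j) = Q(j,i)` for all
`i, j`, and `Q(i,j) ≥ Q(i+1,j)` and `Q(i,j) ≥ Q(i,j+1)` whenever both entries are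
defined. -/
def IsSymPP (m k : ℕ) (Q : ℕ × ℕ → ℕ) : Prop :=
  (∀ x ∈ squareBoxes m, Q x ≤ k) ∧ (∀ x, x ∉ squareBoxes m → Q x = 0) ∧
  (∀ i j : ℕ, Q (i, j) = Q (j, i)) ∧
  (∀ i j : ℕ, (i, j) ∈ squareBoxes m → (i + 1, j) ∈ squareBoxes m →
    Q (i + 1, j) ≤ Q (i, j)) ∧
  (∀ i j : ℕ, (i, j) ∈ squareBoxes m → (i, j + 1) ∈ squareBoxes m →
    Q (i, j + 1) ≤ Q (i, j))

lemma mem_stair {m i j : ℕ} :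
    (i, j) ∈ staircaseBoxes m ↔ 1 ≤ i ∧ i ≤ m ∧ 1 ≤ j ∧ j ≤ m ∧ i + j ≤ m + 1 := by
  simp [staircaseBoxes, Finset.mem_filter, Finset.mem_product, Finset.mem_Icc, and_assoc]

lemma mem_sq {m i j : ℕ} :
    (i, j) ∈ squareBoxes m ↔ 1 ≤ i ∧ i ≤ m ∧ 1 ≤ j ∧ j ≤ m := by
  simp [squareBoxes, Finset.mem_product, Finset.mem_Icc, and_assoc]

def toQ (m : ℕ) (P : ℕ × ℕ → ℕ) : ℕ × ℕ → ℕ :=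
  fun x => P (min x.1 x.2, m + 1 - max x.1 x.2)

def toP (m : ℕ) (Q : ℕ × ℕ → ℕ) : ℕ × ℕ → ℕ :=
  fun x => if x ∈ staircaseBoxes m then Q (x.1, m + 1 - x.2) else 0

lemma toQ_isSym {m k : ℕ} {P : ℕ × ℕ → ℕ} (hP : IsPP (staircaseBoxes m) k P) :
    IsSymPP m k (toQ m P) := by
  obtain ⟨hb, hz, hjm, him⟩ := hP
  have symm : ∀ i j : ℕ, toQ m P (i, j) = toQ m P (j, i) := by
    intro i j; simp [toQ, min_comm, max_comm]
  have dec1 : ∀ i j : ℕ, (i, j) ∈ squareBoxes m → (i + 1, j) ∈ squareBoxes m →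
      toQ m P (i + 1, j) ≤ toQ m P (i, j) := by
    intro i j h1 h2
    rw [mem_sq] at h1 h2
    rcases le_or_gt (i + 1) j with hij | hij
    · have e1 : min (i+1) j = i + 1 := by omega
      have e2 : min i j = i := by omega
      have e3 : max (i+1) j = j := by omega
      have e4 : max i j = j := by omega
      simp only [toQ, e1, e2, e3, e4]
      exact him i (m + 1 - j) (mem_stair.2 (by omega)) (mem_stair.2 (by omega))
    · have e1 : min (i+1) j = j := by omega
      have e2 : min i j = j := by omega
      have e3 : max (i+1) j = i + 1 := by omega
      have e4 : max i j = i := by omega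
      simp only [toQ, e1, e2, e3, e4]
      have h5 : m + 1 - (i + 1) = m - i := by omega
      have h6 : m + 1 - i = (m - i) + 1 := by omega
      rw [h5, h6]
      exact hjm j (m - i) (mem_stair.2 (by omega)) (mem_stair.2 (by omega))
  refine ⟨?_, ?_, symm, dec1, ?_⟩
  · rintro ⟨i, j⟩ hx
    rw [mem_sq] at hx
    exact hb _ (mem_stair.2 (by constructor <;> omega))
  · rintro ⟨i, j⟩ hx
    rw [mem_sq] at hx
    apply hz
    rw [mem_stair]
    omega
  · intro i j h1 h2
    rw [symm i (j+1), symm i j]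
    rw [mem_sq] at h1 h2
    exact dec1 j i (mem_sq.2 (by omega)) (mem_sq.2 (by omega))

lemma toP_isPP {m k : ℕ} {Q : ℕ × ℕ → ℕ} (hQ : IsSymPP m k Q) :
    IsPP (staircaseBoxes m) k (toP m Q) := by
  obtain ⟨hb, hz, hsym, hi, hj⟩ := hQ
  refine ⟨?_, ?_, ?_, ?_⟩
  · rintro ⟨i, j⟩ hx
    have hx' := mem_stair.1 hx
    simp only [toP, hx, if_pos]
    exact hb _ (mem_sq.2 (by omega))
  · intro x hx; simp [toP, hx]
  · intro i j h1 h2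
    have h1' := mem_stair.1 h1
    have h2' := mem_stair.1 h2
    simp only [toP, h1, h2, if_pos]
    have e : m + 1 - j = (m + 1 - (j + 1)) + 1 := by omega
    rw [e]
    exact hj i (m + 1 - (j+1)) (mem_sq.2 (by omega)) (mem_sq.2 (by omega))
  · intro i j h1 h2
    have h1' := mem_stair.1 h1
    have h2' := mem_stair.1 h2
    simp only [toP, h1, h2, if_pos]
    exact hi i (m + 1 - j) (mem_sq.2 (by omega)) (mem_sq.2 (by omega))

lemma left_inv' {m k : ℕ} {P : ℕ × ℕ → ℕ} (hP : IsPP (staircaseBoxes m) k P) :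
    toP m (toQ m P) = P := by
  funext x
  obtain ⟨i, j⟩ := x
  by_cases h : (i, j) ∈ staircaseBoxes m
  · have h' := mem_stair.1 h
    simp only [toP, h, if_pos, toQ]
    have e1 : min i (m + 1 - j) = i := by omega
    have e2 : max i (m + 1 - j) = m + 1 - j := by omega
    have e3 : m + 1 - (m + 1 - j) = j := by omega
    rw [e1, e2, e3]
  · simp only [toP, h, if_neg, not_false_iff]
    exact (hP.2.1 _ h).symm

lemma right_inv' {m k : ℕ} {Q : ℕ × ℕ → ℕ} (hQ : IsSymPP m k Q) :
    toQ m (toP m Q) = Q := by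
  funext x
  obtain ⟨i, j⟩ := x
  by_cases h : (i, j) ∈ squareBoxes m
  · have h' := mem_sq.1 h
    have hmem : (min i j, m + 1 - max i j) ∈ staircaseBoxes m :=
      mem_stair.2 (by constructor <;> omega)
    simp only [toQ, toP, hmem, if_pos]
    have e : m + 1 - (m + 1 - max i j) = max i j := by omega
    rw [e]
    rcases le_total i j with hij | hij
    · rw [min_eq_left hij, max_eq_right hij]
    · rw [min_eq_right hij, max_eq_left hij, hQ.2.2.1]
  ·
    rw [hQ.2.1 _ h]
    have : (min i j, m + 1 - max i j) ∉ staircaseBoxes m := by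
      rw [mem_stair]
      rw [mem_sq] at h
      omega
    simp [toQ, toP, this]

/-- The plane partitions in the `m`-staircase bounded by `k` are equinumerous with
the symmetric plane partitions in the `m × m` box bounded by `k`. -/
theorem statement17 (m k : ℕ) :
    Nat.card {P : ℕ × ℕ → ℕ // IsPP (staircaseBoxes m) k P} =
      Nat.card {Q : ℕ × ℕ → ℕ // IsSymPP m k Q} := by
  refine Nat.card_congr ⟨fun P => ⟨toQ m P.1, toQ_isSym P.2⟩,
    fun Q => ⟨toP m Q.1, toP_isPP Q.2⟩, ?_, ?_⟩
  · rintro ⟨P, hP⟩; exact Subtype.ext (left_inv' hP)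
  · rintro ⟨Q, hQ⟩; exact Subtype.ext (right_inv' hQ)
end
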